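/- arXiv:2307.10407 — 10 statements merged into one kernel-verified Lean document; each statement's English description precedes it below -/
import Mathlib

section
/- In the complete r-partite graph K_{n1,...,nr} with r ≥ 2 and all part sizes n_i > 1, the domination degree of every vertex equals 2. -/
open SimpleGraph

/-- `D` is a dominating set of `G`: every vertex not in `D` is adjacent to a vertex of `D`. -/
def IsDomSet {V : Type*} (G : SimpleGraph V) (D : Set V) : Prop :=
  ∀ v ∉ D, ∃ u ∈ D, G.Adj u v

/-- `D` is a minimal dominating set: dominating and no proper subset is dominating. -/
def IsMinDomSet {V : Type*} (G : SimpleGraph V) (D : Set V) : Prop :=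
  IsDomSet G D ∧ ∀ D' ⊂ D, ¬ IsDomSet G D'

/-- The domination degree of a vertex `a`: the minimum cardinality of a minimal
dominating set containing `a`. -/
noncomputable def domDeg {V : Type*} (G : SimpleGraph V) (a : V) : ℕ :=
  sInf {n | ∃ D : Set V, IsMinDomSet G D ∧ a ∈ D ∧ D.ncard = n}

/-- The domination number: minimum cardinality of a dominating set. -/
noncomputable def domNum {V : Type*} (G : SimpleGraph V) : ℕ :=
  sInf {n | ∃ D : Set V, IsDomSet G D ∧ D.ncard = n}

/-- The upper domination number: maximum cardinality of a minimal dominating set. -/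
noncomputable def upperDomNum {V : Type*} (G : SimpleGraph V) : ℕ :=
  sSup {n | ∃ D : Set V, IsMinDomSet G D ∧ D.ncard = n}

/-- The domination index: sum of domination degrees over all vertices. -/
noncomputable def domIndex {V : Type*} [Fintype V] (G : SimpleGraph V) : ℕ :=
  ∑ a, domDeg G a

theorem stmt5 (r : ℕ) (hr : 2 ≤ r) (n : Fin r → ℕ) (hn : ∀ i, 1 < n i)
    (a : Σ i : Fin r, Fin (n i)) :
    domDeg (SimpleGraph.completeMultipartiteGraph (fun i : Fin r => Fin (n i))) a = 2 := by
  obtain ⟨i, x⟩ := a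
  have hG := SimpleGraph.completeMultipartiteGraph (fun i : Fin r => Fin (n i))
  have hadj : ∀ u v : Σ i : Fin r, Fin (n i),
      (SimpleGraph.completeMultipartiteGraph (fun i : Fin r => Fin (n i))).Adj u v ↔
        u.1 ≠ v.1 := fun u v => by simp
  have hntr : Nontrivial (Fin r) := Fin.nontrivial_iff_two_le.mpr hr
  obtain ⟨j, hj⟩ := exists_ne i
  have hnti : ∀ k : Fin r, Nontrivial (Fin (n k)) := fun k =>
    Fin.nontrivial_iff_two_le.mpr (hn k)
  have hsing : ∀ (k : Fin r) (z : Fin (n k)) (D' : Set (Σ i : Fin r, Fin (n i))),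
      D' ⊆ {⟨k, z⟩} →
      ¬ IsDomSet (SimpleGraph.completeMultipartiteGraph (fun i : Fin r => Fin (n i))) D' := by
    intro k z D' hsub hdom
    have := hnti k
    obtain ⟨z', hz'⟩ := exists_ne z
    have hv : (⟨k, z'⟩ : Σ i : Fin r, Fin (n i)) ∉ D' := by
      intro h
      have h2 := hsub h
      simp only [Set.mem_singleton_iff, Sigma.mk.inj_iff] at h2
      exact hz' (heq_iff_eq.mp h2.2)
    obtain ⟨u, hu, hadju⟩ := hdom _ hv
    have h2 := hsub hu
    simp only [Set.mem_singleton_iff] at h2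
    subst h2
    exact (hadj _ _).mp hadju rfl
  have b : Σ i : Fin r, Fin (n i) := ⟨j, ⟨0, by have := hn j; omega⟩⟩
  set bb : Σ i : Fin r, Fin (n i) := ⟨j, ⟨0, by have := hn j; omega⟩⟩ with hbb
  have hne : (⟨i, x⟩ : Σ i : Fin r, Fin (n i)) ≠ bb := fun h => hj (congrArg Sigma.fst h).symm
  have hDmin : IsMinDomSet (SimpleGraph.completeMultipartiteGraph (fun i : Fin r => Fin (n i)))
      {(⟨i, x⟩ : Σ i : Fin r, Fin (n i)), bb} := by
    constructor
    · intro v hv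
      by_cases hvi : v.1 = i
      · exact ⟨bb, Or.inr rfl, (hadj _ _).mpr (fun h => hj (h.trans hvi))⟩
      · exact ⟨⟨i, x⟩, Or.inl rfl, (hadj _ _).mpr (fun h => hvi h.symm)⟩
    · intro D' hsub hdom
      obtain ⟨hsub', hnsub⟩ := hsub
      obtain ⟨e, he, hne'⟩ := Set.not_subset.mp hnsub
      rcases he with he | he
      · subst he
        refine hsing j ⟨0, by have := hn j; omega⟩ D' ?_ hdom
        intro u hu
        rcases hsub' hu with h | h
        · exact absurd (h ▸ hu) hne'
        · exact h
      · simp only [Set.mem_singleton_iff] at he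
        subst he
        refine hsing i x D' ?_ hdom
        intro u hu
        rcases hsub' hu with h | h
        · exact h
        · simp only [Set.mem_singleton_iff] at h
          exact absurd (h ▸ hu) hne'
  have h2mem : 2 ∈ {m | ∃ D : Set (Σ i : Fin r, Fin (n i)),
      IsMinDomSet (SimpleGraph.completeMultipartiteGraph (fun i : Fin r => Fin (n i))) D ∧
      (⟨i, x⟩ : Σ i : Fin r, Fin (n i)) ∈ D ∧ D.ncard = m} :=
    ⟨_, hDmin, Or.inl rfl, Set.ncard_pair hne⟩
  rw [domDeg]
  refine le_antisymm (Nat.sInf_le h2mem) (le_csInf ⟨2, h2mem⟩ ?_)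
  rintro m ⟨E, ⟨hEdom, _⟩, haE, rfl⟩
  by_contra hlt
  push_neg at hlt
  interval_cases h : E.ncard
  · exact absurd h ((Set.ncard_eq_zero (Set.toFinite E)).not.mpr
      (Set.nonempty_iff_ne_empty.mp ⟨_, haE⟩))
  · obtain ⟨c, hc⟩ := Set.ncard_eq_one.mp h
    subst hc
    simp only [Set.mem_singleton_iff] at haE
    exact hsing i x _ (by subst haE; exact subset_rfl) hEdom
end

section
/- In the cycle C_n on n ≥ 3 vertices, the domination degree of every vertex equals ⌈n/3⌉. -/
open SimpleGraph

/-! ### Auxiliary definitions and lemmas -/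

open Fin.NatCast

def off3 (n i : ℕ) : ℕ := if n % 3 = 1 ∧ i ≠ 0 then 3*i - 1 else 3*i

def relpos {n : ℕ} (v u : Fin n) : ℕ :=
  if v.val ≤ u.val then u.val - v.val else u.val + n - v.val

lemma mod2 {x n : ℕ} (h0 : 0 < n) (h : x < 2*n) :
    x % n = if x < n then x else x - n := by
  clear h0
  split
  · exact Nat.mod_eq_of_lt ‹_›
  · rw [Nat.mod_eq_sub_mod (by omega), Nat.mod_eq_of_lt (by omega)]

lemma relpos_lt {n : ℕ} (v u : Fin n) : relpos v u < n := by
  have := u.isLt; have := v.isLt; unfold relpos; split <;> omega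

lemma relpos_inj {n : ℕ} {v u w : Fin n} (h : relpos v u = relpos v w) : u = w := by
  have := u.isLt; have := w.isLt; have := v.isLt
  apply Fin.ext; unfold relpos at h; split_ifs at h <;> omega

lemma adj_rel {n : ℕ} (hn : 3 ≤ n) (v u w : Fin n) :
    (cycleGraph n).Adj u w ↔ (relpos v u + 1 = relpos v w ∨ relpos v w + 1 = relpos v u ∨
      (relpos v u = 0 ∧ relpos v w = n - 1) ∨ (relpos v w = 0 ∧ relpos v u = n - 1)) := by
  have hu := u.isLt; have hw := w.isLt; have hv := v.isLt
  rw [cycleGraph_adj']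
  rw [Fin.sub_def, Fin.sub_def]
  simp only [Fin.val_mk]
  rw [mod2 (by omega) (by omega), mod2 (by omega) (by omega)]
  unfold relpos
  split_ifs <;> omega

lemma relpos_add {n : ℕ} [NeZero n] (v : Fin n) {m : ℕ} (hm : m < n) :
    relpos v (v + (m : Fin n)) = m := by
  have hv := v.isLt
  have h1 : ((m : Fin n)).val = m := Fin.val_cast_of_lt hm
  have h2 : (v + (m : Fin n)).val = (v.val + m) % n := by
    rw [Fin.add_def, h1]
  unfold relpos
  rw [h2, mod2 (by omega) (by omega)]
  split_ifs <;> omega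

lemma dom_card {n : ℕ} (hn : 3 ≤ n) {D : Set (Fin n)} (hD : IsDomSet (cycleGraph n) D) :
    n ≤ 3 * D.ncard := by
  classical
  haveI : NeZero n := ⟨by omega⟩
  have hfin : D.Finite := Set.toFinite D
  have hsub : (Finset.univ : Finset (Fin n)) ⊆
      hfin.toFinset.biUnion (fun d => {d - 1, d, d + 1}) := by
    intro u _
    rw [Finset.mem_biUnion]
    by_cases hu : u ∈ D
    · exact ⟨u, hfin.mem_toFinset.2 hu, by simp⟩
    · obtain ⟨d, hd, hadj⟩ := hD u hu
      refine ⟨d, hfin.mem_toFinset.2 hd, ?_⟩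
      rw [cycleGraph_adj'] at hadj
      have h1 : ((1 : Fin n)).val = 1 := by rw [Fin.val_one', Nat.mod_eq_of_lt (by omega)]
      simp only [Finset.mem_insert, Finset.mem_singleton]
      rcases hadj with h | h
      · -- (d - u).val = 1, so d - u = 1, so u = d - 1
        have hdu : d - u = 1 := Fin.ext (by rw [h, h1])
        left
        rw [← hdu, sub_sub_cancel]
      · have hud : u - d = 1 := Fin.ext (by rw [h, h1])
        right; right
        rw [← hud, add_sub_cancel]
  have h1 : n ≤ (hfin.toFinset.biUnion (fun d => ({d - 1, d, d + 1} : Finset (Fin n)))).card := by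
    have := Finset.card_le_card hsub
    simpa using this
  have h2 := Finset.card_biUnion_le (s := hfin.toFinset)
    (t := fun d => ({d - 1, d, d + 1} : Finset (Fin n)))
  have h3 : ∑ d ∈ hfin.toFinset, ({d - 1, d, d + 1} : Finset (Fin n)).card
      ≤ ∑ _d ∈ hfin.toFinset, 3 := by
    apply Finset.sum_le_sum
    intro d _
    have a1 := Finset.card_insert_le (d - 1) ({d, d + 1} : Finset (Fin n))
    have a2 := Finset.card_insert_le d ({d + 1} : Finset (Fin n))
    have a3 : ({d + 1} : Finset (Fin n)).card = 1 := Finset.card_singleton _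
    omega
  rw [Finset.sum_const, smul_eq_mul] at h3
  have h4 : D.ncard = hfin.toFinset.card := Set.ncard_eq_toFinset_card _ hfin
  omega

theorem stmt7 (n : ℕ) (hn : 3 ≤ n) (v : Fin n) :
    domDeg (SimpleGraph.cycleGraph n) v = (n + 2) / 3 := by
  classical
  haveI : NeZero n := ⟨by omega⟩
  set k := (n + 2) / 3 with hk
  have hk1 : 1 ≤ k := by omega
  have hoff_lt : ∀ i < k, off3 n i < n := by
    intro i hi; unfold off3; split <;> omega
  set f : Fin k → Fin n := fun i => v + ((off3 n i.val : ℕ) : Fin n) with hf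
  have hrelf : ∀ i : Fin k, relpos v (f i) = off3 n i.val :=
    fun i => relpos_add v (hoff_lt i.val i.isLt)
  set D : Set (Fin n) := Set.range f with hD
  -- membership characterization
  have hmem : ∀ u : Fin n, u ∈ D ↔
      (if n % 3 = 1 then relpos v u = 0 ∨ relpos v u % 3 = 2 else relpos v u % 3 = 0) := by
    intro u
    constructor
    · rintro ⟨i, rfl⟩
      rw [hrelf]
      have := i.isLt
      unfold off3
      split_ifs <;> omega
    · intro hPu
      have hmn : relpos v u < n := relpos_lt v u
      have hik : ∃ i0 < k, off3 n i0 = relpos v u := by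
        refine ⟨if n % 3 = 1 ∧ relpos v u ≠ 0 then (relpos v u + 1)/3 else relpos v u / 3, ?_⟩
        unfold off3
        split_ifs at hPu ⊢ <;> omega
      obtain ⟨i0, hi0k, hi0⟩ := hik
      exact ⟨⟨i0, hi0k⟩, relpos_inj ((hrelf ⟨i0, hi0k⟩).trans hi0)⟩
  -- v ∈ D
  have hvD : v ∈ D := by
    refine ⟨⟨0, hk1⟩, ?_⟩
    simp [hf, off3]
  -- dominating
  have hdom : IsDomSet (cycleGraph n) D := by
    intro u hu
    rw [hmem] at hu
    have hmn : relpos v u < n := relpos_lt v u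
    have key : ∀ m' : ℕ, m' < n →
        (if n % 3 = 1 then m' = 0 ∨ m' % 3 = 2 else m' % 3 = 0) →
        (m' + 1 = relpos v u ∨ relpos v u + 1 = m' ∨
          (m' = 0 ∧ relpos v u = n - 1) ∨ (relpos v u = 0 ∧ m' = n - 1)) →
        ∃ d ∈ D, (cycleGraph n).Adj d u := by
      intro m' h1 h2 h3
      refine ⟨v + (m' : Fin n), ?_, ?_⟩
      · rw [hmem, relpos_add v h1]; exact h2
      · rw [adj_rel hn v, relpos_add v h1]; exact h3
    by_cases h3 : n % 3 = 1
    · rw [if_pos h3] at hu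
      by_cases hm1 : relpos v u % 3 = 1
      · exact key (relpos v u + 1) (by omega) (by rw [if_pos h3]; omega) (by omega)
      · exact key (relpos v u - 1) (by omega) (by rw [if_pos h3]; omega) (by omega)
    · rw [if_neg h3] at hu
      by_cases hm1 : relpos v u % 3 = 1
      · exact key (relpos v u - 1) (by omega) (by rw [if_neg h3]; omega) (by omega)
      · by_cases hmn2 : relpos v u + 1 < n
        · exact key (relpos v u + 1) (by omega) (by rw [if_neg h3]; omega) (by omega)
        · exact key 0 (by omega) (by rw [if_neg h3]) (by omega)
  -- independence
  have hindep : ∀ d ∈ D, ∀ d' ∈ D, ¬ (cycleGraph n).Adj d d' := by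
    intro d hd d' hd'
    rw [hmem] at hd hd'
    rw [adj_rel hn v]
    have h1 := relpos_lt v d; have h2 := relpos_lt v d'
    split_ifs at hd hd' <;> omega
  -- cardinality
  have hcard : D.ncard = k := by
    have hfinj : Function.Injective f := by
      intro i j hij
      have hoe : off3 n i.val = off3 n j.val := by
        rw [← hrelf i, ← hrelf j, hij]
      have hi := i.isLt; have hj := j.isLt
      unfold off3 at hoe
      apply Fin.ext
      split_ifs at hoe <;> omega
    have himg : D = f '' Set.univ := by rw [hD, Set.image_univ]
    rw [himg, Set.ncard_image_of_injective _ hfinj, Set.ncard_univ,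
      Nat.card_eq_fintype_card, Fintype.card_fin]
  -- minimality
  have hmin : IsMinDomSet (cycleGraph n) D := by
    refine ⟨hdom, ?_⟩
    intro D' hsub hdom'
    obtain ⟨hle, hne⟩ := hsub
    obtain ⟨d, hdD, hdD'⟩ := Set.not_subset.1 hne
    obtain ⟨u, huD', hadj⟩ := hdom' d hdD'
    exact hindep u (hle huD') d hdD hadj
  -- conclude
  have hSmem : k ∈ {m | ∃ E : Set (Fin n), IsMinDomSet (cycleGraph n) E ∧ v ∈ E ∧ E.ncard = m} :=
    ⟨D, hmin, hvD, hcard⟩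
  have hlow : ∀ m ∈ {m | ∃ E : Set (Fin n), IsMinDomSet (cycleGraph n) E ∧ v ∈ E ∧ E.ncard = m},
      k ≤ m := by
    rintro m ⟨E, hE, _, rfl⟩
    have := dom_card hn hE.1
    omega
  have h1 : domDeg (cycleGraph n) v ≤ k := Nat.sInf_le hSmem
  have h2 := Nat.sInf_mem ⟨k, hSmem⟩
  have h3 := hlow _ h2
  exact le_antisymm h1 h3
end

section
/- In the wheel graph W_n (the join of a single vertex with the cycle C_n, n ≥ 3), the domination degree of the center vertex is 1, and the domination degree of every rim vertex is ⌈n/3⌉. -/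
open SimpleGraph

/-- The join of two graphs: disjoint union plus all edges between the two parts. -/
def graphJoin {V W : Type*} (G : SimpleGraph V) (H : SimpleGraph W) :
    SimpleGraph (V ⊕ W) where
  Adj x y :=
    match x, y with
    | Sum.inl a, Sum.inl b => G.Adj a b
    | Sum.inr a, Sum.inr b => H.Adj a b
    | Sum.inl _, Sum.inr _ => True
    | Sum.inr _, Sum.inl _ => True
  symm := by constructor; rintro (a | a) (b | b) h <;> simp_all <;> exact h.symm
  loopless := by constructor; rintro (a | a) h <;> simp_all

section AuxLemmas

open Fin.CommRing

lemma val_one_fin {n : ℕ} [NeZero n] (hn : 3 ≤ n) : ((1 : Fin n)).val = 1 := by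
  rw [← Nat.cast_one, Fin.val_cast_of_lt (by omega)]

lemma count_bound {n : ℕ} (hn : 3 ≤ n) (E : Set (Fin n))
    (hE : IsDomSet (SimpleGraph.cycleGraph n) E) : n ≤ 3 * E.ncard := by
  haveI : NeZero n := ⟨by omega⟩
  classical
  have hfin : E.Finite := Set.toFinite E
  have hsub : (Finset.univ : Finset (Fin n)) ⊆
      hfin.toFinset.biUnion (fun x => {x-1, x, x+1}) := by
    intro w _
    rw [Finset.mem_biUnion]
    by_cases hw : w ∈ E
    · exact ⟨w, by simpa using hw, by simp⟩
    · obtain ⟨u, hu, hadj⟩ := hE w hw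
      refine ⟨u, by simpa using hu, ?_⟩
      rw [SimpleGraph.cycleGraph_adj'] at hadj
      rcases hadj with h | h
      · have h2 : u - w = 1 := Fin.ext (by rw [val_one_fin hn]; exact h)
        have : w = u - 1 := by rw [← h2]; ring
        simp [this]
      · have h2 : w - u = 1 := Fin.ext (by rw [val_one_fin hn]; exact h)
        have : w = u + 1 := by rw [← h2]; ring
        simp [this]
  have h1 := Finset.card_le_card hsub
  have h2 := Finset.card_biUnion_le (s := hfin.toFinset)
      (t := fun x : Fin n => ({x-1, x, x+1} : Finset (Fin n)))
  have h3 : ∀ x : Fin n, ({x-1, x, x+1} : Finset (Fin n)).card ≤ 3 := by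
    intro x
    refine (Finset.card_insert_le _ _).trans ?_
    exact Nat.succ_le_succ ((Finset.card_insert_le _ _).trans (by simp))
  have h4 : ∑ x ∈ hfin.toFinset, ({x-1, x, x+1} : Finset (Fin n)).card
      ≤ 3 * hfin.toFinset.card := by
    calc ∑ x ∈ hfin.toFinset, ({x-1, x, x+1} : Finset (Fin n)).card
        ≤ ∑ _x ∈ hfin.toFinset, 3 := Finset.sum_le_sum (fun x _ => h3 x)
      _ = 3 * hfin.toFinset.card := by rw [Finset.sum_const, smul_eq_mul, mul_comm]
  have hcard : E.ncard = hfin.toFinset.card := Set.ncard_eq_toFinset_card E hfin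
  simp only [Finset.card_univ, Fintype.card_fin] at h1
  omega

lemma constr {n : ℕ} (hn : 3 ≤ n) (v : Fin n) :
    ∃ E : Set (Fin n), v ∈ E ∧ E.ncard = (n+2)/3 ∧
      IsDomSet (SimpleGraph.cycleGraph n) E := by
  haveI : NeZero n := ⟨by omega⟩
  classical
  set k := (n+2)/3 with hk
  have h3k : n ≤ 3*k ∧ 3*k ≤ n+2 ∧ 1 ≤ k := by omega
  set f : ℕ → Fin n := fun j => v + ((3*j : ℕ) : Fin n) with hf
  refine ⟨↑((Finset.range k).image f), ?_, ?_, ?_⟩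
  · simp only [Finset.coe_image, Set.mem_image, Finset.mem_coe, Finset.mem_range]
    exact ⟨0, by omega, by simp [hf]⟩
  · rw [Set.ncard_coe_finset, Finset.card_image_of_injOn, Finset.card_range]
    intro j1 h1 j2 h2 heq
    simp only [Finset.coe_range, Set.mem_Iio] at h1 h2
    have e1 : ((3*j1 : ℕ) : Fin n) = ((3*j2 : ℕ) : Fin n) := by
      have := heq; simpa [hf] using this
    have := congrArg Fin.val e1
    rw [Fin.val_cast_of_lt (by omega), Fin.val_cast_of_lt (by omega)] at this
    omega
  · intro w hw
    simp only [Finset.coe_image, Set.mem_image, Finset.mem_coe, Finset.mem_range] at hw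
    push_neg at hw
    set d := (w - v).val with hd
    have hdn : d < n := (w - v).is_lt
    have hwd : w = v + (d : Fin n) := by
      rw [hd, Fin.cast_val_eq_self]; ring
    have hmem : ∀ j < k, f j ∈ (↑((Finset.range k).image f) : Set (Fin n)) := by
      intro j hj
      simp only [Finset.coe_image, Set.mem_image, Finset.mem_coe, Finset.mem_range]
      exact ⟨j, hj, rfl⟩
    rcases (show d % 3 = 0 ∨ d % 3 = 1 ∨ d % 3 = 2 by omega) with h | h | h
    · exfalso
      have hj : d / 3 < k := by omega
      apply hw (d/3) hj
      rw [hf]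
      simp only
      rw [show 3 * (d/3) = d by omega, ← hwd]
    · refine ⟨f ((d-1)/3), hmem _ (by omega), ?_⟩
      have h31 : 3 * ((d-1)/3) = d - 1 := by omega
      have hwu : w = f ((d-1)/3) + 1 := by
        rw [hf]; simp only
        rw [h31, hwd]
        have : ((d - 1 : ℕ) : Fin n) + 1 = ((d : ℕ) : Fin n) := by
          rw [show (d:ℕ) = (d-1)+1 by omega]
          push_cast
          ring
        rw [add_assoc, this]
      rw [SimpleGraph.cycleGraph_adj']
      right
      rw [hwu, add_sub_cancel_left, val_one_fin hn]
    · by_cases hlast : d = n - 1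
      · refine ⟨f 0, hmem _ (by omega), ?_⟩
        rw [SimpleGraph.cycleGraph_adj']
        left
        have hf0 : f 0 = v := by simp [hf]
        have : f 0 - w = 1 := by
          rw [hf0, hwd, hlast]
          have hz : ((n - 1 : ℕ) : Fin n) + 1 = 0 := by
            have h5 : (((n-1)+1 : ℕ) : Fin n) = ((n:ℕ) : Fin n) := by congr 1; omega
            push_cast at h5
            rw [h5, Fin.natCast_self]
          have : -(((n - 1 : ℕ) : Fin n)) = 1 := neg_eq_of_add_eq_zero_right hz
          rw [← this]; ring
        rw [this, val_one_fin hn]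
      · refine ⟨f ((d+1)/3), hmem _ (by omega), ?_⟩
        have h31 : 3 * ((d+1)/3) = d + 1 := by omega
        have hwu : f ((d+1)/3) = w + 1 := by
          rw [hf]; simp only
          rw [h31, hwd]
          push_cast
          ring
        rw [SimpleGraph.cycleGraph_adj']
        left
        rw [hwu, add_sub_cancel_left, val_one_fin hn]

variable {n : ℕ}

local notation "Gw" => graphJoin (⊤ : SimpleGraph Unit) (SimpleGraph.cycleGraph n)

lemma center_dom : IsDomSet Gw ({Sum.inl ()} : Set (Unit ⊕ Fin n)) := by
  rintro (⟨⟩ | w) hx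
  · simp at hx
  · exact ⟨Sum.inl (), rfl, trivial⟩

lemma center_minDom : IsMinDomSet Gw ({Sum.inl ()} : Set (Unit ⊕ Fin n)) := by
  refine ⟨center_dom, ?_⟩
  intro D' hD' hdom
  rw [Set.ssubset_singleton_iff] at hD'
  subst hD'
  obtain ⟨u, hu, -⟩ := hdom (Sum.inl ()) (by simp)
  exact hu

lemma lift_dom (E : Set (Fin n)) (hne : E.Nonempty)
    (hE : IsDomSet (SimpleGraph.cycleGraph n) E) :
    IsDomSet Gw (Sum.inr '' E) := by
  rintro (⟨⟩ | w) hx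
  · obtain ⟨x, hx⟩ := hne
    exact ⟨Sum.inr x, Set.mem_image_of_mem _ hx, trivial⟩
  · have hw : w ∉ E := fun h => hx (Set.mem_image_of_mem _ h)
    obtain ⟨u, hu, hadj⟩ := hE w hw
    exact ⟨Sum.inr u, Set.mem_image_of_mem _ hu, hadj⟩

lemma lower_dom (D : Set (Unit ⊕ Fin n)) (hD : IsDomSet Gw D)
    (hc : Sum.inl () ∉ D) : IsDomSet (SimpleGraph.cycleGraph n) (Sum.inr ⁻¹' D) := by
  intro w hw
  obtain ⟨u, hu, hadj⟩ := hD (Sum.inr w) hw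
  match u with
  | Sum.inl () => exact absurd hu hc
  | Sum.inr x => exact ⟨x, hu, hadj⟩

end AuxLemmas

theorem stmt8 (n : ℕ) (hn : 3 ≤ n) :
    domDeg (graphJoin (⊤ : SimpleGraph Unit) (SimpleGraph.cycleGraph n)) (Sum.inl ()) = 1 ∧
    ∀ v : Fin n,
      domDeg (graphJoin (⊤ : SimpleGraph Unit) (SimpleGraph.cycleGraph n)) (Sum.inr v)
        = (n + 2) / 3 := by
  constructor
  · -- center
    rw [domDeg]
    have hmem : 1 ∈ {m | ∃ D : Set (Unit ⊕ Fin n),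
        IsMinDomSet (graphJoin (⊤ : SimpleGraph Unit) (SimpleGraph.cycleGraph n)) D ∧
        Sum.inl () ∈ D ∧ D.ncard = m} :=
      ⟨{Sum.inl ()}, center_minDom, rfl, Set.ncard_singleton _⟩
    refine le_antisymm (Nat.sInf_le hmem) (le_csInf ⟨1, hmem⟩ ?_)
    rintro m ⟨D, -, haD, rfl⟩
    exact (Set.ncard_pos (Set.toFinite D)).mpr ⟨_, haD⟩
  · intro v
    rw [domDeg]
    set k := (n+2)/3 with hk
    obtain ⟨E, hvE, hcardE, hdomE⟩ := constr hn v
    have hEfin : E.Finite := Set.toFinite E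
    -- membership
    have hmem : k ∈ {m | ∃ D : Set (Unit ⊕ Fin n),
        IsMinDomSet (graphJoin (⊤ : SimpleGraph Unit) (SimpleGraph.cycleGraph n)) D ∧
        Sum.inr v ∈ D ∧ D.ncard = m} := by
      refine ⟨Sum.inr '' E, ⟨lift_dom E ⟨v, hvE⟩ hdomE, ?_⟩,
        Set.mem_image_of_mem _ hvE,
        by rw [Set.ncard_image_of_injective _ Sum.inr_injective, hcardE]⟩
      intro D' hss hdom'
      have hsub : D' ⊆ Sum.inr '' E := hss.subset
      have hc : Sum.inl () ∉ D' := by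
        intro h
        obtain ⟨x, -, hx⟩ := hsub h
        exact Sum.inr_ne_inl hx
      have hdomcyc := lower_dom D' hdom' hc
      have hDeq : Sum.inr '' (Sum.inr ⁻¹' D') = D' :=
        Set.image_preimage_eq_of_subset
          (hsub.trans (Set.image_subset_range _ _))
      have hEsub : Sum.inr ⁻¹' D' ⊂ E := by
        constructor
        · intro x hx
          obtain ⟨y, hy, hxy⟩ := hsub hx
          rwa [← Sum.inr_injective hxy]
        · intro hcon
          have : Sum.inr '' E ⊆ D' := by
            rw [← hDeq]
            exact Set.image_mono hcon
          exact hss.not_subset this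
      have hlt : (Sum.inr ⁻¹' D').ncard < E.ncard :=
        Set.ncard_lt_ncard hEsub hEfin
      have := count_bound hn _ hdomcyc
      omega
    refine le_antisymm (Nat.sInf_le hmem) (le_csInf ⟨k, hmem⟩ ?_)
    rintro m ⟨D, ⟨hdom, hmin⟩, hvD, rfl⟩
    have hc : Sum.inl () ∉ D := by
      intro h
      refine hmin {Sum.inl ()} ?_ center_dom
      refine (Set.singleton_subset_iff.mpr h).ssubset_of_ne ?_
      intro heq
      rw [← heq] at hvD
      exact Sum.inr_ne_inl hvD
    have hdomcyc := lower_dom D hdom hc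
    have hDeq : Sum.inr '' (Sum.inr ⁻¹' D) = D := by
      apply Set.image_preimage_eq_of_subset
      intro x hx
      match x with
      | Sum.inl () => exact absurd hx hc
      | Sum.inr w => exact ⟨w, rfl⟩
    have hcard : D.ncard = (Sum.inr ⁻¹' D).ncard := by
      conv_lhs => rw [← hDeq]
      exact Set.ncard_image_of_injective _ Sum.inr_injective
    have := count_bound hn _ hdomcyc
    omega
end

section
/- Let P_n be the path with vertices a_1,...,a_n in order, n = 3k. Then the domination degree of a_i equals k if i ≡ 2 (mod 3), and equals k+1 if i ≡ 0 or 1 (mod 3). -/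
open SimpleGraph

set_option linter.unreachableTactic false
set_option linter.unusedTactic false
set_option linter.unusedVariables false

section Aux
variable {k j : ℕ}

lemma ncard_range' {m : ℕ} {α : Type*} (g : Fin m → α) (hg : Function.Injective g) :
    (Set.range g).ncard = m := by
  rw [← Set.image_univ, Set.ncard_image_of_injective _ hg, Set.ncard_univ,
    Nat.card_eq_fintype_card, Fintype.card_fin]

lemma min_of_private' {V : Type*} {G : SimpleGraph V} {D : Set V}
    (hdom : IsDomSet G D)
    (hpriv : ∀ d ∈ D, ∃ w : V, ∀ u ∈ D, (u = w ∨ G.Adj u w) → u = d) :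
    IsMinDomSet G D := by
  refine ⟨hdom, fun D' hD' hdom' => ?_⟩
  obtain ⟨d, hdD, hdD'⟩ := Set.exists_of_ssubset hD'
  obtain ⟨w, hw⟩ := hpriv d hdD
  have hwD' : w ∉ D' := fun hwD' => hdD' (hw w (hD'.1 hwD') (Or.inl rfl) ▸ hwD')
  obtain ⟨u, huD', hadj⟩ := hdom' w hwD'
  exact hdD' (hw u (hD'.1 huD') (Or.inr hadj) ▸ huD')


def DD1 (k j : ℕ) : Set (Fin (3*k)) :=
  {x | (x.val < 3*j ∧ x.val % 3 = 1) ∨ x.val = 3*j ∨ (3*j < x.val ∧ x.val % 3 = 2)}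

def DD2 (k j : ℕ) : Set (Fin (3*k)) :=
  {x | (x.val ≤ 3*j ∧ x.val % 3 = 0) ∨ x.val = 3*j+2 ∨ (3*j+2 < x.val ∧ x.val % 3 = 1)}

lemma DD1_card (hj : j < k) : (DD1 k j).ncard = k + 1 := by
  have h : DD1 k j = Set.range (fun i : Fin (k+1) =>
      (⟨if i.val < j then 3*i.val+1 else if i.val = j then 3*j else 3*i.val-1,
        by have := i.isLt; split <;> (try split) <;> omega⟩ : Fin (3*k))) := by
    ext x
    simp only [DD1, Set.mem_setOf_eq, Set.mem_range]
    constructor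
    · intro hx
      rcases hx with ⟨h1, h2⟩ | h1 | ⟨h1, h2⟩
      · refine ⟨⟨x.val/3, by omega⟩, Fin.ext ?_⟩
        simp only [Fin.val_mk]
        split <;> (try split) <;> omega
      · refine ⟨⟨j, by omega⟩, Fin.ext ?_⟩
        simp only [Fin.val_mk, if_true, lt_self_iff_false, if_false]
        omega
      · refine ⟨⟨x.val/3 + 1, by have := x.isLt; omega⟩, Fin.ext ?_⟩
        simp only [Fin.val_mk]
        split <;> (try split) <;> omega
    · rintro ⟨i, rfl⟩
      have := i.isLt
      simp only [Fin.val_mk]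
      split <;> (try split) <;> omega
  rw [h]
  refine ncard_range' _ ?_
  intro a b hab
  have h2 := congrArg Fin.val hab
  simp only [Fin.val_mk] at h2
  have := a.isLt; have := b.isLt
  refine Fin.ext ?_
  split at h2 <;> (try split at h2) <;> (try split at h2) <;> (try split at h2) <;> omega

lemma DD2_card (hj : j < k) : (DD2 k j).ncard = k + 1 := by
  have h : DD2 k j = Set.range (fun i : Fin (k+1) =>
      (⟨if i.val ≤ j then 3*i.val else if i.val = j+1 then 3*j+2 else 3*i.val-2,
        by have := i.isLt; split <;> (try split) <;> omega⟩ : Fin (3*k))) := by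
    ext x
    simp only [DD2, Set.mem_setOf_eq, Set.mem_range]
    constructor
    · intro hx
      rcases hx with ⟨h1, h2⟩ | h1 | ⟨h1, h2⟩
      · refine ⟨⟨x.val/3, by omega⟩, Fin.ext ?_⟩
        simp only [Fin.val_mk]
        split <;> (try split) <;> omega
      · refine ⟨⟨j+1, by omega⟩, Fin.ext ?_⟩
        simp only [Fin.val_mk]
        rw [if_neg (by omega), if_pos trivial]
        omega
      · refine ⟨⟨x.val/3 + 1, by have := x.isLt; omega⟩, Fin.ext ?_⟩
        simp only [Fin.val_mk]
        split <;> (try split) <;> omega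
    · rintro ⟨i, rfl⟩
      have := i.isLt
      simp only [Fin.val_mk]
      split <;> (try split) <;> omega
  rw [h]
  refine ncard_range' _ ?_
  intro a b hab
  have h2 := congrArg Fin.val hab
  simp only [Fin.val_mk] at h2
  have := a.isLt; have := b.isLt
  refine Fin.ext ?_
  split at h2 <;> (try split at h2) <;> (try split at h2) <;> (try split at h2) <;> omega

lemma DD1_dom (hj : j < k) : IsDomSet (pathGraph (3*k)) (DD1 k j) := by
  intro x hx
  simp only [DD1, Set.mem_setOf_eq] at hx
  push_neg at hx
  have hxlt := x.isLt
  have h3 : x.val % 3 = 0 ∨ x.val % 3 = 1 ∨ x.val % 3 = 2 := by omega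
  rcases h3 with h3 | h3 | h3
  · -- residue 0, x ≠ 3j
    by_cases hlt : x.val < 3*j
    · refine ⟨⟨x.val+1, by omega⟩, ?_, ?_⟩
      · simp only [DD1, Set.mem_setOf_eq, Fin.val_mk]; first | omega | tauto
      · rw [pathGraph_adj]; simp only [Fin.val_mk]; first | omega | tauto
    · refine ⟨⟨x.val-1, by omega⟩, ?_, ?_⟩
      · simp only [DD1, Set.mem_setOf_eq, Fin.val_mk]; first | omega | tauto
      · rw [pathGraph_adj]; simp only [Fin.val_mk]; first | omega | tauto
  · -- residue 1: x ≥ 3j, in fact x > 3j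
    by_cases heq : x.val = 3*j+1
    · refine ⟨⟨3*j, by omega⟩, ?_, ?_⟩
      · simp only [DD1, Set.mem_setOf_eq, Fin.val_mk]; first | omega | tauto
      · rw [pathGraph_adj]; simp only [Fin.val_mk]; first | omega | tauto
    · refine ⟨⟨x.val+1, by omega⟩, ?_, ?_⟩
      · simp only [DD1, Set.mem_setOf_eq, Fin.val_mk]; first | omega | tauto
      · rw [pathGraph_adj]; simp only [Fin.val_mk]; first | omega | tauto
  · -- residue 2: x < 3j
    refine ⟨⟨x.val-1, by omega⟩, ?_, ?_⟩
    · simp only [DD1, Set.mem_setOf_eq, Fin.val_mk]; first | omega | tauto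
    · rw [pathGraph_adj]; simp only [Fin.val_mk]; first | omega | tauto

lemma DD2_dom (hj : j < k) : IsDomSet (pathGraph (3*k)) (DD2 k j) := by
  intro x hx
  simp only [DD2, Set.mem_setOf_eq] at hx
  push_neg at hx
  have hxlt := x.isLt
  have h3 : x.val % 3 = 0 ∨ x.val % 3 = 1 ∨ x.val % 3 = 2 := by omega
  rcases h3 with h3 | h3 | h3
  · -- residue 0: x > 3j
    refine ⟨⟨x.val+1, by omega⟩, ?_, ?_⟩
    · simp only [DD2, Set.mem_setOf_eq, Fin.val_mk]; first | omega | tauto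
    · rw [pathGraph_adj]; simp only [Fin.val_mk]; first | omega | tauto
  · -- residue 1: x ≤ 3j+1
    refine ⟨⟨x.val-1, by omega⟩, ?_, ?_⟩
    · simp only [DD2, Set.mem_setOf_eq, Fin.val_mk]; first | omega | tauto
    · rw [pathGraph_adj]; simp only [Fin.val_mk]; first | omega | tauto
  · -- residue 2: x ≠ 3j+2
    by_cases hlt : x.val < 3*j+2
    · refine ⟨⟨x.val+1, by omega⟩, ?_, ?_⟩
      · simp only [DD2, Set.mem_setOf_eq, Fin.val_mk]; first | omega | tauto
      · rw [pathGraph_adj]; simp only [Fin.val_mk]; first | omega | tauto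
    · refine ⟨⟨x.val-1, by omega⟩, ?_, ?_⟩
      · simp only [DD2, Set.mem_setOf_eq, Fin.val_mk]; first | omega | tauto
      · rw [pathGraph_adj]; simp only [Fin.val_mk]; first | omega | tauto

lemma DD1_min (hj : j < k) : IsMinDomSet (pathGraph (3*k)) (DD1 k j) := by
  refine min_of_private' (DD1_dom hj) ?_
  intro d hd
  simp only [DD1, Set.mem_setOf_eq] at hd
  have hdlt := d.isLt
  have key : ∀ wv : ℕ, ∀ hw : wv < 3*k,
      (∀ u ∈ DD1 k j, (u.val = wv ∨ u.val + 1 = wv ∨ wv + 1 = u.val) → u.val = d.val) →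
      ∃ w : Fin (3*k), ∀ u ∈ DD1 k j, (u = w ∨ (pathGraph (3*k)).Adj u w) → u = d := by
    intro wv hw hker
    refine ⟨⟨wv, hw⟩, fun u hu hc => ?_⟩
    refine Fin.ext (hker u hu ?_)
    rcases hc with h | h
    · exact Or.inl (by rw [h])
    · rw [pathGraph_adj] at h; simp only [Fin.val_mk] at h; omega
  rcases hd with ⟨h1, h2⟩ | h1 | ⟨h1, h2⟩
  · -- d = 3i+1, i < j; private vertex d - 1
    refine key (d.val - 1) (by omega) ?_
    intro u hu hc
    simp only [DD1, Set.mem_setOf_eq] at hu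
    omega
  · -- d = 3j; private vertex d
    refine key d.val (by omega) ?_
    intro u hu hc
    simp only [DD1, Set.mem_setOf_eq] at hu
    omega
  · -- d = 3i+2, i ≥ j; private vertex d
    refine key d.val (by omega) ?_
    intro u hu hc
    simp only [DD1, Set.mem_setOf_eq] at hu
    omega

lemma DD2_min (hj : j < k) : IsMinDomSet (pathGraph (3*k)) (DD2 k j) := by
  refine min_of_private' (DD2_dom hj) ?_
  intro d hd
  simp only [DD2, Set.mem_setOf_eq] at hd
  have hdlt := d.isLt
  have key : ∀ wv : ℕ, ∀ hw : wv < 3*k,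
      (∀ u ∈ DD2 k j, (u.val = wv ∨ u.val + 1 = wv ∨ wv + 1 = u.val) → u.val = d.val) →
      ∃ w : Fin (3*k), ∀ u ∈ DD2 k j, (u = w ∨ (pathGraph (3*k)).Adj u w) → u = d := by
    intro wv hw hker
    refine ⟨⟨wv, hw⟩, fun u hu hc => ?_⟩
    refine Fin.ext (hker u hu ?_)
    rcases hc with h | h
    · exact Or.inl (by rw [h])
    · rw [pathGraph_adj] at h; simp only [Fin.val_mk] at h; omega
  rcases hd with ⟨h1, h2⟩ | h1 | ⟨h1, h2⟩
  · -- d = 3i, i ≤ j; private vertex d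
    refine key d.val (by omega) ?_
    intro u hu hc
    simp only [DD2, Set.mem_setOf_eq] at hu
    omega
  · -- d = 3j+2; private vertex d
    refine key d.val (by omega) ?_
    intro u hu hc
    simp only [DD2, Set.mem_setOf_eq] at hu
    omega
  · -- d = 3i+1, i > j; private vertex d+1
    refine key (d.val + 1) (by omega) ?_
    intro u hu hc
    simp only [DD2, Set.mem_setOf_eq] at hu
    omega


lemma domset_block (D : Set (Fin (3*k))) (hD : IsDomSet (pathGraph (3*k)) D)
    (j : ℕ) (hj : j < k) : ∃ x ∈ D, x.val / 3 = j := by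
  set m : Fin (3*k) := ⟨3*j+1, by omega⟩ with hm
  by_cases hmD : m ∈ D
  · exact ⟨m, hmD, by simp [hm]; omega⟩
  · obtain ⟨u, hu, hadj⟩ := hD m hmD
    rw [pathGraph_adj] at hadj
    simp only [hm] at hadj
    exact ⟨u, hu, by omega⟩

lemma D0_card : ({x : Fin (3*k) | x.val % 3 = 1}).ncard = k := by
  have h : {x : Fin (3*k) | x.val % 3 = 1} =
      Set.range (fun j : Fin k => (⟨3*j.val+1, by have := j.isLt; omega⟩ : Fin (3*k))) := by
    ext x
    simp only [Set.mem_setOf_eq, Set.mem_range]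
    constructor
    · intro hx
      refine ⟨⟨x.val/3, by have := x.isLt; omega⟩, Fin.ext ?_⟩
      simp only [Fin.val_mk]
      omega
    · rintro ⟨i, rfl⟩
      simp only [Fin.val_mk]
      omega
  rw [h]
  refine ncard_range' _ ?_
  intro a b hab
  have := congrArg Fin.val hab
  simp only [Fin.val_mk] at this
  exact Fin.ext (by omega)

lemma eq_D0 (D : Set (Fin (3*k))) (hD : IsDomSet (pathGraph (3*k)) D)
    (hcard : D.ncard = k) : D = {x : Fin (3*k) | x.val % 3 = 1} := by
  choose f hf1 hf2 using fun j : Fin k => domset_block D hD j j.isLt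
  have hinj : Function.Injective f := by
    intro a b hab
    have ha := hf2 a; have hb := hf2 b
    rw [hab] at ha
    exact Fin.ext (by omega)
  have hrange : Set.range f = D :=
    Set.eq_of_subset_of_ncard_le (Set.range_subset_iff.mpr hf1)
      (by rw [hcard, ncard_range' f hinj])
  have huniq : ∀ x ∈ D, ∀ y ∈ D, x.val / 3 = y.val / 3 → x = y := by
    intro x hx y hy hxy
    rw [← hrange] at hx hy
    obtain ⟨a, rfl⟩ := hx
    obtain ⟨b, rfl⟩ := hy
    have ha := hf2 a; have hb := hf2 b
    have : a = b := Fin.ext (by omega)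
    rw [this]
  -- no residue 2
  have hR : ∀ j : ℕ, ∀ x ∈ D, x.val / 3 = j → ¬ (x.val % 3 = 2) := by
    intro j
    induction j using Nat.strong_induction_on with
    | _ j IH =>
      intro x hx hxj hx2
      have hjk : j < k := by have := x.isLt; omega
      set m : Fin (3*k) := ⟨3*j, by omega⟩ with hm
      by_cases hmD : m ∈ D
      · have := huniq x hx m hmD (by simp [hm]; omega)
        rw [this] at hx2
        simp only [hm, Fin.val_mk] at hx2
        omega
      · obtain ⟨u, hu, hadj⟩ := hD m hmD
        rw [pathGraph_adj] at hadj
        simp only [hm, Fin.val_mk] at hadj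
        rcases hadj with h | h
        · -- u.val + 1 = 3*j, so u.val = 3j-1, block j-1, residue 2
          exact IH (j-1) (by omega) u hu (by omega) (by omega)
        · -- u.val = 3*j+1, same block as x
          have := huniq x hx u hu (by omega)
          rw [this] at hx2
          omega
  -- no residue 0
  have hQ : ∀ d : ℕ, ∀ j : ℕ, k - j ≤ d → ∀ x ∈ D, x.val / 3 = j → ¬ (x.val % 3 = 0) := by
    intro d
    induction d with
    | zero =>
      intro j hd x hx hxj _
      have := x.isLt
      omega
    | succ d IH =>
      intro j hd x hx hxj hx0
      have hjk : j < k := by have := x.isLt; omega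
      set m : Fin (3*k) := ⟨3*j+2, by omega⟩ with hm
      by_cases hmD : m ∈ D
      · have := huniq x hx m hmD (by simp [hm]; omega)
        rw [this] at hx0
        simp only [hm, Fin.val_mk] at hx0
        omega
      · obtain ⟨u, hu, hadj⟩ := hD m hmD
        rw [pathGraph_adj] at hadj
        simp only [hm, Fin.val_mk] at hadj
        rcases hadj with h | h
        · -- u.val = 3j+1, same block
          have := huniq x hx u hu (by omega)
          rw [this] at hx0
          omega
        · -- u.val = 3j+3, block j+1, residue 0
          exact IH (j+1) (by omega) u hu (by omega) (by omega)
  have hsub : D ⊆ {x : Fin (3*k) | x.val % 3 = 1} := by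
    intro x hx
    have h2 := hR (x.val/3) x hx rfl
    have h0 := hQ k (x.val/3) (by omega) x hx rfl
    simp only [Set.mem_setOf_eq]
    omega
  exact Set.eq_of_subset_of_ncard_le hsub (by rw [hcard, D0_card])

lemma D0_min (hk : 0 < k) :
    IsMinDomSet (pathGraph (3*k)) {x : Fin (3*k) | x.val % 3 = 1} := by
  constructor
  · intro x hx
    simp only [Set.mem_setOf_eq] at hx
    have hxlt := x.isLt
    by_cases h0 : x.val % 3 = 0
    · refine ⟨⟨x.val+1, by omega⟩, by simp only [Set.mem_setOf_eq, Fin.val_mk]; omega, ?_⟩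
      rw [pathGraph_adj]; simp only [Fin.val_mk]
      right; trivial
    · refine ⟨⟨x.val-1, by omega⟩, by simp only [Set.mem_setOf_eq, Fin.val_mk]; omega, ?_⟩
      rw [pathGraph_adj]; simp only [Fin.val_mk]; omega
  · intro D' hss hdom'
    obtain ⟨u, hu, hu'⟩ := Set.exists_of_ssubset hss
    simp only [Set.mem_setOf_eq] at hu
    obtain ⟨w, hw, hadj⟩ := hdom' u hu'
    have hw' := hss.1 hw
    simp only [Set.mem_setOf_eq] at hw'
    rw [pathGraph_adj] at hadj
    omega


lemma lower_bound {k : ℕ} (D : Set (Fin (3*k))) (hD : IsDomSet (pathGraph (3*k)) D) :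
    k ≤ D.ncard := by
  choose f hf1 hf2 using fun j : Fin k => domset_block D hD j j.isLt
  have hinj : Function.Injective f := by
    intro a b hab
    have ha := hf2 a; have hb := hf2 b
    rw [hab] at ha
    exact Fin.ext (by omega)
  calc k = (Set.range f).ncard := (ncard_range' f hinj).symm
    _ ≤ D.ncard := Set.ncard_le_ncard (Set.range_subset_iff.mpr hf1) (Set.toFinite D)


end Aux

theorem stmt9 (k : ℕ) (v : Fin (3 * k)) :
    domDeg (SimpleGraph.pathGraph (3 * k)) v =
      if (v.val + 1) % 3 = 2 then k else k + 1 := by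
  have hvlt := v.isLt
  have hk : 0 < k := by omega
  rw [domDeg]
  set S := {n | ∃ D : Set (Fin (3*k)),
      IsMinDomSet (pathGraph (3*k)) D ∧ v ∈ D ∧ D.ncard = n} with hS
  have hlb : ∀ n ∈ S, k ≤ n := by
    rintro n ⟨D, hD, _, rfl⟩
    exact lower_bound D hD.1
  by_cases hv : (v.val + 1) % 3 = 2
  · rw [if_pos hv]
    have hmem : k ∈ S :=
      ⟨{x : Fin (3*k) | x.val % 3 = 1}, D0_min hk,
        by simp only [Set.mem_setOf_eq]; omega, D0_card⟩
    exact le_antisymm (Nat.sInf_le hmem) (hlb _ (Nat.sInf_mem ⟨k, hmem⟩))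
  · rw [if_neg hv]
    have hne : (k+1) ∈ S := by
      rcases (show v.val % 3 = 0 ∨ v.val % 3 = 2 by omega) with h | h
      · exact ⟨DD1 k (v.val/3), DD1_min (by omega),
          by simp only [DD1, Set.mem_setOf_eq]; omega, DD1_card (by omega)⟩
      · exact ⟨DD2 k (v.val/3), DD2_min (by omega),
          by simp only [DD2, Set.mem_setOf_eq]; omega, DD2_card (by omega)⟩
    refine le_antisymm (Nat.sInf_le hne) ?_
    obtain ⟨D, hD, hvD, hcard⟩ := Nat.sInf_mem (⟨k+1, hne⟩ : S.Nonempty)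
    have hge : k ≤ D.ncard := lower_bound D hD.1
    rcases Nat.lt_or_ge (sInf S) (k+1) with hlt | hge'
    · exfalso
      have hDk : D.ncard = k := by omega
      have hD0 := eq_D0 D hD.1 hDk
      rw [hD0] at hvD
      simp only [Set.mem_setOf_eq] at hvD
      omega
    · exact hge'
end

section
/- Let P_n be the path on n vertices with n = 3k+1. Then the domination degree of every vertex equals k+1 = ⌈n/3⌉. -/
open SimpleGraph

/-- Helper: an independent dominating set of the path is a minimal dominating set. -/
lemma path_minDom (k : ℕ) (P : Fin (3 * k + 1) → Prop)
    (hdom : ∀ x : Fin (3 * k + 1), ∃ u : Fin (3 * k + 1),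
      P u ∧ (u = x ∨ u.val + 1 = x.val ∨ x.val + 1 = u.val))
    (hind : ∀ u x : Fin (3 * k + 1), P u → P x → u.val + 1 ≠ x.val) :
    IsMinDomSet (pathGraph (3 * k + 1)) {x | P x} := by
  constructor
  · intro x hx
    obtain ⟨u, hu, hc⟩ := hdom x
    rcases hc with rfl | h
    · exact absurd hu hx
    · exact ⟨u, hu, pathGraph_adj.mpr h⟩
  · intro D' hD' hdom'
    obtain ⟨x, hxD, hxD'⟩ := Set.exists_of_ssubset hD'
    obtain ⟨u, huD', hadj⟩ := hdom' x hxD'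
    have huD : P u := hD'.1 huD'
    rcases pathGraph_adj.mp hadj with h | h
    · exact hind u x huD hxD h
    · exact hind x u hxD huD h

/-- Helper: a set that is the range of an injection from `Fin (k+1)` has `ncard = k+1`. -/
lemma path_card (k : ℕ) (P : Fin (3 * k + 1) → Prop) (g : Fin (k + 1) → Fin (3 * k + 1))
    (hg : ∀ x, P x ↔ ∃ i, g i = x) (hinj : Function.Injective g) :
    Set.ncard {x | P x} = k + 1 := by
  have : {x | P x} = Set.range g := by
    ext x; simp [hg, Set.mem_range]
  rw [this, ← Set.image_univ, Set.ncard_image_of_injective _ hinj, Set.ncard_univ]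
  simp

/-- Lower bound: any dominating set of the path on `3k+1` vertices has at least `k+1` vertices. -/
lemma path_lb (k : ℕ) (D : Set (Fin (3 * k + 1)))
    (hD : IsDomSet (pathGraph (3 * k + 1)) D) : k + 1 ≤ D.ncard := by
  classical
  have h : ∀ x : Fin (3 * k + 1), ∃ u, u ∈ D ∧ (u = x ∨ (pathGraph (3 * k + 1)).Adj u x) := by
    intro x
    by_cases hx : x ∈ D
    · exact ⟨x, hx, Or.inl rfl⟩
    · obtain ⟨u, hu, ha⟩ := hD x hx
      exact ⟨u, hu, Or.inr ha⟩
  choose f hfD hfa using h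
  have key : (Finset.univ : Finset (Fin (3 * k + 1))).card ≤ 3 * (Finset.univ.image f).card := by
    apply Finset.card_le_mul_card_image
    intro a _
    calc (Finset.univ.filter fun x => f x = a).card
        = ((Finset.univ.filter fun x => f x = a).image Fin.val).card :=
          (Finset.card_image_of_injective _ Fin.val_injective).symm
      _ ≤ ({a.val - 1, a.val, a.val + 1} : Finset ℕ).card := by
          apply Finset.card_le_card
          intro m hm
          simp only [Finset.mem_image, Finset.mem_filter, Finset.mem_univ, true_and] at hm
          obtain ⟨y, hfy, hym⟩ := hm
          have hy := hfa y
          rw [hfy] at hy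
          simp only [Finset.mem_insert, Finset.mem_singleton]
          rcases hy with rfl | hadj
          · omega
          · rcases pathGraph_adj.mp hadj with h | h <;> omega
      _ ≤ 3 := by
          refine le_trans (Finset.card_insert_le _ _) ?_
          have h2 := Finset.card_insert_le a.val ({a.val + 1} : Finset ℕ)
          simp only [Finset.card_singleton] at h2 ⊢
          omega
  have hfin : D.Finite := D.toFinite
  have hsub : Finset.univ.image f ⊆ hfin.toFinset := by
    intro x hx
    simp only [Finset.mem_image, Finset.mem_univ, true_and] at hx
    obtain ⟨y, rfl⟩ := hx
    exact hfin.mem_toFinset.mpr (hfD y)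
  have hcard := Finset.card_le_card hsub
  rw [Set.ncard_eq_toFinset_card D hfin]
  simp only [Finset.card_univ, Fintype.card_fin] at key
  omega

theorem stmt10 (k : ℕ) (v : Fin (3 * k + 1)) :
    domDeg (SimpleGraph.pathGraph (3 * k + 1)) v = k + 1 := by
  have hv := v.isLt
  have hmem : ∃ D : Set (Fin (3 * k + 1)),
      IsMinDomSet (pathGraph (3 * k + 1)) D ∧ v ∈ D ∧ D.ncard = k + 1 := by
    rcases (show v.val % 3 = 0 ∨ v.val % 3 = 1 ∨ v.val % 3 = 2 by omega) with hr | hr | hr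
    · -- residue 0 : D = multiples of 3
      refine ⟨{x | x.val % 3 = 0}, path_minDom k _ ?_ ?_, hr, path_card k _
        (fun i => ⟨3 * i.val, by have := i.isLt; omega⟩) ?_ ?_⟩
      · intro x
        have hx := x.isLt
        rcases (show x.val % 3 = 0 ∨ x.val % 3 = 1 ∨ x.val % 3 = 2 by omega) with h | h | h
        · exact ⟨x, h, Or.inl rfl⟩
        · exact ⟨⟨x.val - 1, by omega⟩, show (x.val - 1) % 3 = 0 by omega,
            Or.inr (Or.inl (show x.val - 1 + 1 = x.val by omega))⟩
        · exact ⟨⟨x.val + 1, by omega⟩, show (x.val + 1) % 3 = 0 by omega,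
            Or.inr (Or.inr rfl)⟩
      · intro u x hu hx
        have hu' : u.val % 3 = 0 := hu
        have hx' : x.val % 3 = 0 := hx
        omega
      · intro x
        have hx := x.isLt
        constructor
        · intro h
          have h' : x.val % 3 = 0 := h
          refine ⟨⟨x.val / 3, by omega⟩, Fin.ext ?_⟩
          show 3 * (x.val / 3) = x.val
          omega
        · rintro ⟨i, rfl⟩
          show 3 * i.val % 3 = 0
          omega
      · intro i j hij
        have h3 : 3 * i.val = 3 * j.val := congrArg Fin.val hij
        exact Fin.ext (by omega)
    · -- residue 1 : D = {x ≡ 1 mod 3} ∪ {3k}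
      refine ⟨{x | x.val % 3 = 1 ∨ x.val = 3 * k}, path_minDom k _ ?_ ?_, Or.inl hr,
        path_card k _
        (fun i => ⟨min (3 * i.val + 1) (3 * k), by have := i.isLt; omega⟩) ?_ ?_⟩
      · intro x
        have hx := x.isLt
        rcases (show x.val % 3 = 0 ∨ x.val % 3 = 1 ∨ x.val % 3 = 2 by omega) with h | h | h
        · by_cases h3 : x.val = 3 * k
          · exact ⟨x, Or.inr h3, Or.inl rfl⟩
          · exact ⟨⟨x.val + 1, by omega⟩, Or.inl (show (x.val + 1) % 3 = 1 by omega),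
              Or.inr (Or.inr rfl)⟩
        · exact ⟨x, Or.inl h, Or.inl rfl⟩
        · exact ⟨⟨x.val - 1, by omega⟩, Or.inl (show (x.val - 1) % 3 = 1 by omega),
            Or.inr (Or.inl (show x.val - 1 + 1 = x.val by omega))⟩
      · intro u x hu hx
        have h1 := u.isLt; have h2 := x.isLt
        have hu' : u.val % 3 = 1 ∨ u.val = 3 * k := hu
        have hx' : x.val % 3 = 1 ∨ x.val = 3 * k := hx
        omega
      · intro x
        have hx := x.isLt
        constructor
        · intro h
          have h' : x.val % 3 = 1 ∨ x.val = 3 * k := h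
          rcases h' with h' | h'
          · refine ⟨⟨x.val / 3, by omega⟩, Fin.ext ?_⟩
            show min (3 * (x.val / 3) + 1) (3 * k) = x.val
            omega
          · refine ⟨⟨k, by omega⟩, Fin.ext ?_⟩
            show min (3 * k + 1) (3 * k) = x.val
            omega
        · rintro ⟨i, rfl⟩
          have hi := i.isLt
          show min (3 * i.val + 1) (3 * k) % 3 = 1 ∨ min (3 * i.val + 1) (3 * k) = 3 * k
          omega
      · intro i j hij
        have h1 := i.isLt; have h2 := j.isLt
        have h3 : min (3 * i.val + 1) (3 * k) = min (3 * j.val + 1) (3 * k) :=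
          congrArg Fin.val hij
        exact Fin.ext (by omega)
    · -- residue 2 : D = {x ≡ 2 mod 3} ∪ {0}
      refine ⟨{x | x.val % 3 = 2 ∨ x.val = 0}, path_minDom k _ ?_ ?_, Or.inl hr,
        path_card k _
        (fun i => ⟨3 * i.val - 1, by have := i.isLt; omega⟩) ?_ ?_⟩
      · intro x
        have hx := x.isLt
        rcases (show x.val % 3 = 0 ∨ x.val % 3 = 1 ∨ x.val % 3 = 2 by omega) with h | h | h
        · by_cases h0 : x.val = 0
          · exact ⟨x, Or.inr h0, Or.inl rfl⟩
          · exact ⟨⟨x.val - 1, by omega⟩, Or.inl (show (x.val - 1) % 3 = 2 by omega),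
              Or.inr (Or.inl (show x.val - 1 + 1 = x.val by omega))⟩
        · exact ⟨⟨x.val + 1, by omega⟩, Or.inl (show (x.val + 1) % 3 = 2 by omega),
            Or.inr (Or.inr rfl)⟩
        · exact ⟨x, Or.inl h, Or.inl rfl⟩
      · intro u x hu hx
        have h1 := u.isLt; have h2 := x.isLt
        have hu' : u.val % 3 = 2 ∨ u.val = 0 := hu
        have hx' : x.val % 3 = 2 ∨ x.val = 0 := hx
        omega
      · intro x
        have hx := x.isLt
        constructor
        · intro h
          have h' : x.val % 3 = 2 ∨ x.val = 0 := h
          rcases h' with h' | h'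
          · refine ⟨⟨(x.val + 1) / 3, by omega⟩, Fin.ext ?_⟩
            show 3 * ((x.val + 1) / 3) - 1 = x.val
            omega
          · refine ⟨⟨0, by omega⟩, Fin.ext ?_⟩
            show 3 * 0 - 1 = x.val
            omega
        · rintro ⟨i, rfl⟩
          have hi := i.isLt
          show (3 * i.val - 1) % 3 = 2 ∨ 3 * i.val - 1 = 0
          omega
      · intro i j hij
        have h1 := i.isLt; have h2 := j.isLt
        have h3 : 3 * i.val - 1 = 3 * j.val - 1 := congrArg Fin.val hij
        exact Fin.ext (by omega)
  obtain ⟨D, hmin, hvD, hcard⟩ := hmem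
  have hin : k + 1 ∈ {n | ∃ D : Set (Fin (3 * k + 1)),
      IsMinDomSet (pathGraph (3 * k + 1)) D ∧ v ∈ D ∧ D.ncard = n} := ⟨D, hmin, hvD, hcard⟩
  apply le_antisymm
  · exact Nat.sInf_le hin
  · apply le_csInf ⟨_, hin⟩
    rintro n ⟨D', hmin', _, rfl⟩
    exact path_lb k D' hmin'.1
end

section
/- In the book graph B_n = S_{n+1} × P_2 (Cartesian product of the star with n leaves and an edge), with n ≥ 2, the two center vertices have domination degree 2 and every other vertex has domination degree n. -/
open SimpleGraph

/-- The star graph `K_{1,n}`: center `none` adjacent to the `n` leaves `some j`. -/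
def starGraph' (n : ℕ) : SimpleGraph (Option (Fin n)) :=
  SimpleGraph.fromRel (fun x _ => x = none)

lemma star_adj {n : ℕ} (x y : Option (Fin n)) :
    (starGraph' n).Adj x y ↔ x ≠ y ∧ (x = none ∨ y = none) := by
  simp [starGraph']

lemma path2_adj (c d : Fin 2) : (SimpleGraph.pathGraph 2).Adj c d ↔ c ≠ d := by
  fin_cases c <;> fin_cases d <;> simp [SimpleGraph.pathGraph_adj]

lemma book_adj {n : ℕ} (u v : Option (Fin n) × Fin 2) :
    ((starGraph' n).boxProd (SimpleGraph.pathGraph 2)).Adj u v ↔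
      ((u.1 ≠ v.1 ∧ (u.1 = none ∨ v.1 = none)) ∧ u.2 = v.2) ∨
      (u.1 = v.1 ∧ u.2 ≠ v.2) := by
  rw [SimpleGraph.boxProd_adj, star_adj, path2_adj]; tauto

lemma fin2_ne_add_one : ∀ a : Fin 2, a ≠ a + 1 := by decide
lemma fin2_eq_or : ∀ c b : Fin 2, c = b ∨ c = b + 1 := by decide
lemma fin2_ne_imp : ∀ x y : Fin 2, x ≠ y → x = y + 1 := by decide

lemma center_domDeg {n : ℕ} (hn : 2 ≤ n) (b : Fin 2) :
    domDeg ((starGraph' n).boxProd (SimpleGraph.pathGraph 2)) (none, b) = 2 := by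
  set G := (starGraph' n).boxProd (SimpleGraph.pathGraph 2) with hG
  set D : Set (Option (Fin n) × Fin 2) := {(none, 0), (none, 1)} with hD
  have hmem : ∀ (x : Option (Fin n)) (c : Fin 2), (x, c) ∈ D ↔ x = none := by
    intro x c
    fin_cases c <;> simp [hD, Prod.ext_iff]
  have hdom : IsDomSet G D := by
    rintro ⟨x, c⟩ hv
    match x with
    | none => exact absurd ((hmem none c).mpr rfl) hv
    | some i =>
      refine ⟨(none, c), (hmem none c).mpr rfl, ?_⟩
      rw [book_adj]
      left
      exact ⟨⟨by simp, Or.inl rfl⟩, rfl⟩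
  have hmin : IsMinDomSet G D := by
    refine ⟨hdom, ?_⟩
    rintro D' hss hdom'
    obtain ⟨⟨x, c⟩, hyD, hyD'⟩ := Set.exists_of_ssubset hss
    have hx : x = none := (hmem x c).mp hyD
    subst hx
    have hw : ((some ⟨0, by omega⟩ : Option (Fin n)), c) ∉ D' := fun h => by
      have := (hmem _ c).mp (hss.1 h); simp at this
    obtain ⟨⟨ux, uc⟩, huD', hadj⟩ := hdom' _ hw
    have hu : ux = none := (hmem ux uc).mp (hss.1 huD')
    subst hu
    rw [book_adj] at hadj
    rcases hadj with ⟨⟨_, _⟩, h2⟩ | ⟨h1, _⟩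
    · simp only at h2
      subst h2
      exact hyD' huD'
    · simp at h1
  have hcard : D.ncard = 2 := by
    rw [hD, Set.ncard_pair (by simp [Prod.ext_iff])]
  have h2S : 2 ∈ {m | ∃ E, IsMinDomSet G E ∧ ((none : Option (Fin n)), b) ∈ E ∧ E.ncard = m} :=
    ⟨D, hmin, (hmem none b).mpr rfl, hcard⟩
  have hlb : ∀ m ∈ {m | ∃ E, IsMinDomSet G E ∧ ((none : Option (Fin n)), b) ∈ E ∧ E.ncard = m},
      2 ≤ m := by
    rintro m ⟨E, hEmin, hbE, rfl⟩
    have hx : ∃ x ∈ E, x ≠ ((none : Option (Fin n)), b) := by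
      by_cases hw : ((some (⟨0, by omega⟩ : Fin n) : Option (Fin n)), b + 1) ∈ E
      · exact ⟨_, hw, by simp [Prod.ext_iff]⟩
      · obtain ⟨u, huE, hadj⟩ := hEmin.1 _ hw
        refine ⟨u, huE, ?_⟩
        rintro rfl
        rw [book_adj] at hadj
        rcases hadj with ⟨_, h2⟩ | ⟨h1, _⟩
        · exact fin2_ne_add_one b h2
        · simp at h1
    obtain ⟨x, hxE, hxne⟩ := hx
    have hpair : ({((none : Option (Fin n)), b), x} : Set _).ncard = 2 :=
      Set.ncard_pair (Ne.symm hxne)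
    have hle := Set.ncard_le_ncard (Set.insert_subset hbE (Set.singleton_subset_iff.mpr hxE))
      (Set.toFinite E)
    omega
  rw [domDeg]
  exact le_antisymm (Nat.sInf_le h2S) (le_csInf ⟨2, h2S⟩ hlb)

lemma leaf_domDeg {n : ℕ} (hn : 2 ≤ n) (j : Fin n) (b : Fin 2) :
    domDeg ((starGraph' n).boxProd (SimpleGraph.pathGraph 2)) (some j, b) = n := by
  classical
  set G := (starGraph' n).boxProd (SimpleGraph.pathGraph 2) with hG
  set f : Fin n → Option (Fin n) × Fin 2 :=
    fun i => (some i, if i = j then b else b + 1) with hf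
  have finj : Function.Injective f := by
    intro i k h
    have h1 : (some i : Option (Fin n)) = some k := congrArg Prod.fst h
    simpa using h1
  have hk : ∃ k : Fin n, k ≠ j := by
    rcases Decidable.eq_or_ne (⟨0, by omega⟩ : Fin n) j with h | h
    · refine ⟨⟨1, by omega⟩, ?_⟩
      rw [← h]
      simp [Fin.ext_iff]
    · exact ⟨_, h⟩
  have hdomD : IsDomSet G (Set.range f) := by
    rintro ⟨x, c⟩ hv
    match x with
    | none =>
      have hi : ∃ i : Fin n, (if i = j then b else b + 1) = c := by
        rcases fin2_eq_or c b with h | h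
        · exact ⟨j, by simp [h]⟩
        · obtain ⟨k, hkj⟩ := hk
          exact ⟨k, by simp [hkj, h.symm]⟩
      obtain ⟨i, hi⟩ := hi
      refine ⟨f i, Set.mem_range_self i, ?_⟩
      rw [book_adj]
      left
      exact ⟨⟨by simp [hf], Or.inr rfl⟩, hi⟩
    | some i =>
      refine ⟨f i, Set.mem_range_self i, ?_⟩
      rw [book_adj]
      right
      refine ⟨rfl, ?_⟩
      intro hc
      exact hv ⟨i, Prod.ext_iff.mpr ⟨rfl, hc⟩⟩
  have hminD : IsMinDomSet G (Set.range f) := by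
    refine ⟨hdomD, ?_⟩
    rintro D' hss hdom'
    obtain ⟨y, hyD, hyD'⟩ := Set.exists_of_ssubset hss
    obtain ⟨i, rfl⟩ := hyD
    set p : Option (Fin n) × Fin 2 := (some i, (f i).2 + 1) with hp
    have hpD : p ∉ Set.range f := by
      rintro ⟨k, hkp⟩
      have h1 : (some k : Option (Fin n)) = some i := congrArg Prod.fst hkp
      have h2 : k = i := by simpa using h1
      subst h2
      have h3 : (f k).2 = (f k).2 + 1 := congrArg Prod.snd hkp
      exact fin2_ne_add_one _ h3
    obtain ⟨u, huD', hadj⟩ := hdom' p (fun h => hpD (hss.1 h))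
    obtain ⟨m, rfl⟩ := hss.1 huD'
    rw [book_adj] at hadj
    rcases hadj with ⟨⟨_, h1 | h1⟩, _⟩ | ⟨h1, _⟩
    · simp [hf] at h1
    · simp [hp] at h1
    · have hmi : m = i := by simpa [hf, hp] using h1
      subst hmi
      exact hyD' huD'
  have hcard : (Set.range f).ncard = n := by
    rw [← Set.image_univ, Set.ncard_image_of_injective _ finj, Set.ncard_univ,
      Nat.card_eq_fintype_card, Fintype.card_fin]
  have hnS : n ∈ {m | ∃ E, IsMinDomSet G E ∧ ((some j : Option (Fin n)), b) ∈ E ∧ E.ncard = m} :=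
    ⟨Set.range f, hminD, ⟨j, by simp [hf]⟩, hcard⟩
  have hlb : ∀ m ∈ {m | ∃ E, IsMinDomSet G E ∧ ((some j : Option (Fin n)), b) ∈ E ∧ E.ncard = m},
      n ≤ m := by
    rintro m ⟨E, hEmin, hjE, rfl⟩
    have hc : ∃ c : Fin 2, ((none : Option (Fin n)), c) ∉ E := by
      by_contra hcc
      push_neg at hcc
      have hss : E \ {((some j : Option (Fin n)), b)} ⊂ E :=
        Set.sdiff_singleton_ssubset.mpr hjE
      refine hEmin.2 _ hss ?_
      rintro ⟨x, c⟩ hv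
      match x with
      | some i =>
        refine ⟨(none, c), ⟨hcc c, by simp [Prod.ext_iff]⟩, ?_⟩
        rw [book_adj]
        left
        exact ⟨⟨by simp, Or.inl rfl⟩, rfl⟩
      | none =>
        exact absurd (⟨hcc c, by simp⟩ : ((none : Option (Fin n)), c) ∈
          E \ {((some j : Option (Fin n)), b)}) hv
    obtain ⟨c, hcE⟩ := hc
    have hg : ∀ i : Fin n, ((some i : Option (Fin n)), c) ∈ E ∨
        ((some i : Option (Fin n)), c + 1) ∈ E := by
      intro i
      by_cases h : ((some i : Option (Fin n)), c) ∈ E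
      · exact Or.inl h
      · obtain ⟨⟨ux, uc⟩, huE, hadj⟩ := hEmin.1 _ h
        rw [book_adj] at hadj
        right
        rcases hadj with ⟨⟨hne, h1 | h1⟩, h2⟩ | ⟨h1, h2⟩
        · simp only at h1 h2
          subst h1; subst h2
          exact absurd huE hcE
        · simp at h1
        · simp only at h1 h2
          subst h1
          rw [fin2_ne_imp _ _ h2] at huE
          exact huE
    set g : Fin n → Option (Fin n) × Fin 2 :=
      fun i => if ((some i : Option (Fin n)), c) ∈ E then ((some i : Option (Fin n)), c)
        else ((some i : Option (Fin n)), c + 1) with hgdef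
    have hgE : ∀ i, g i ∈ E := by
      intro i
      by_cases h : ((some i : Option (Fin n)), c) ∈ E
      · simp [hgdef, h]
      · have h2 := (hg i).resolve_left h
        simpa [hgdef, h] using h2
    have ginj : Function.Injective g := by
      intro i k h
      have h1 : (g i).1 = (g k).1 := congrArg Prod.fst h
      have h2 : (some i : Option (Fin n)) = some k := by
        simpa [hgdef, apply_ite Prod.fst] using h1
      simpa using h2
    have hrange : (Set.range g).ncard = n := by
      rw [← Set.image_univ, Set.ncard_image_of_injective _ ginj, Set.ncard_univ,
        Nat.card_eq_fintype_card, Fintype.card_fin]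
    have hle := Set.ncard_le_ncard (Set.range_subset_iff.mpr hgE) (Set.toFinite E)
    omega
  rw [domDeg]
  exact le_antisymm (Nat.sInf_le hnS) (le_csInf ⟨n, hnS⟩ hlb)

theorem stmt11 (n : ℕ) (hn : 2 ≤ n) :
    (∀ b : Fin 2,
      domDeg ((starGraph' n).boxProd (SimpleGraph.pathGraph 2)) (none, b) = 2) ∧
    (∀ (j : Fin n) (b : Fin 2),
      domDeg ((starGraph' n).boxProd (SimpleGraph.pathGraph 2)) (some j, b) = n) := by
  exact ⟨fun b => center_domDeg hn b, fun j b => leaf_domDeg hn j b⟩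
end

section
/- In the windmill graph Wd(r,s) (s ≥ 2 copies of the complete graph K_r, r ≥ 3, sharing exactly one common vertex), the domination degree of the common center vertex is 1, and the domination degree of every other vertex is s. -/
open SimpleGraph

/-- The windmill graph `Wd(r,s)`: `s` copies of `K_r` sharing the common center `none`;
the non-center vertices of the `i`-th copy are the `some (i, a)` with `a : Fin (r-1)`. -/
def windmill (r s : ℕ) : SimpleGraph (Option (Fin s × Fin (r - 1))) :=
  SimpleGraph.fromRel (fun x y => x = none ∨
    ∃ (i : Fin s) (a b : Fin (r - 1)), x = some (i, a) ∧ y = some (i, b))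

lemma wadj_none {r s : ℕ} (p : Fin s × Fin (r-1)) :
    (windmill r s).Adj none (some p) := by
  simp [windmill, SimpleGraph.fromRel_adj]

lemma wadj_some {r s : ℕ} (i j : Fin s) (a b : Fin (r-1)) :
    (windmill r s).Adj (some (i,a)) (some (j,b)) ↔ i = j ∧ a ≠ b := by
  simp only [windmill, SimpleGraph.fromRel_adj]
  constructor
  · rintro ⟨hne, (h|⟨i',a',b',h1,h2⟩)|(h|⟨i',a',b',h1,h2⟩)⟩
    · exact absurd h (by simp)
    · simp only [Option.some.injEq, Prod.mk.injEq] at h1 h2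
      obtain ⟨rfl, rfl⟩ := h1
      obtain ⟨rfl, rfl⟩ := h2
      exact ⟨rfl, fun h => hne (by simp [h])⟩
    · exact absurd h (by simp)
    · simp only [Option.some.injEq, Prod.mk.injEq] at h1 h2
      obtain ⟨rfl, rfl⟩ := h1
      obtain ⟨rfl, rfl⟩ := h2
      exact ⟨rfl, fun h => hne (by simp [h])⟩
  · rintro ⟨rfl, hab⟩
    exact ⟨by simp [hab], Or.inl (Or.inr ⟨i, a, b, rfl, rfl⟩)⟩

theorem stmt12 (r s : ℕ) (hr : 3 ≤ r) (hs : 2 ≤ s) :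
    domDeg (windmill r s) none = 1 ∧
    ∀ (i : Fin s) (a : Fin (r - 1)), domDeg (windmill r s) (some (i, a)) = s := by
  have hr1 : 0 < r - 1 := by omega
  constructor
  · -- center
    apply le_antisymm
    · apply Nat.sInf_le
      refine ⟨{none}, ⟨?_, ?_⟩, rfl, by simp⟩
      · intro v hv
        match v with
        | none => simp at hv
        | some p => exact ⟨none, rfl, wadj_none p⟩
      · intro D' hD' hdom
        have : D' = ∅ := by
          exact Set.ssubset_singleton_iff.mp hD'
        subst this
        obtain ⟨u, hu, _⟩ := hdom none (by simp)
        exact hu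
    · refine le_csInf ⟨1, {none}, ⟨?_, ?_⟩, rfl, by simp⟩ ?_
      · intro v hv
        match v with
        | none => simp at hv
        | some p => exact ⟨none, rfl, wadj_none p⟩
      · intro D' hD' hdom
        have : D' = ∅ := Set.ssubset_singleton_iff.mp hD'
        subst this
        obtain ⟨u, hu, _⟩ := hdom none (by simp)
        exact hu
      · rintro n ⟨D, hD, hmem, rfl⟩
        have : D.Nonempty := ⟨none, hmem⟩
        have hfin : D.Finite := Set.toFinite D
        exact (Set.ncard_pos hfin).mpr this
  · intro i a
    have hmemS : s ∈ {n | ∃ D, IsMinDomSet (windmill r s) D ∧ some (i,a) ∈ D ∧ D.ncard = n} := by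
      refine ⟨Set.range (fun j : Fin s => (some (j, a) : Option (Fin s × Fin (r-1)))), ⟨?_, ?_⟩, ⟨i, rfl⟩, ?_⟩
      · intro v hv
        match v with
        | none => exact ⟨some (i, a), ⟨i, rfl⟩, (wadj_none _).symm⟩
        | some (j, b) =>
          have hba : b ≠ a := by
            rintro rfl; exact hv ⟨j, rfl⟩
          exact ⟨some (j, a), ⟨j, rfl⟩, (wadj_some j j a b).mpr ⟨rfl, fun h => hba h.symm⟩⟩
      · intro D' hD' hdom
        obtain ⟨x, hxD, hxD'⟩ := Set.exists_of_ssubset hD'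
        obtain ⟨j, rfl⟩ := hxD
        obtain ⟨u, hu, hadj⟩ := hdom _ hxD'
        obtain ⟨k, rfl⟩ := hD'.1 hu
        rw [wadj_some] at hadj
        exact hadj.2 rfl
      · have hinj : Function.Injective (fun j : Fin s => (some (j, a) : Option (Fin s × Fin (r-1)))) := by
          intro x y h; simpa using h
        rw [← Nat.card_coe_set_eq, Nat.card_range_of_injective hinj,
          Nat.card_eq_fintype_card, Fintype.card_fin]
    apply le_antisymm (Nat.sInf_le hmemS)
    refine le_csInf ⟨s, hmemS⟩ ?_
    rintro n ⟨D, ⟨hdom, hmin⟩, hmem, rfl⟩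
    -- none ∉ D
    have hnone : none ∉ D := by
      intro hn
      apply hmin (D \ {some (i,a)}) ⟨Set.diff_subset, fun hsub => (hsub hmem).2 rfl⟩
      intro v hv
      by_cases hvi : v = some (i,a)
      · subst hvi
        exact ⟨none, ⟨hn, by simp⟩, wadj_none _⟩
      · have hvD : v ∉ D := fun h => hv ⟨h, hvi⟩
        have hvn : v ≠ none := fun h => hvD (h ▸ hn)
        match v, hvn with
        | some p, _ => exact ⟨none, ⟨hn, by simp⟩, wadj_none p⟩
    -- each blade meets D
    have hblade : ∀ j : Fin s, ∃ b : Fin (r-1), some (j, b) ∈ D := by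
      intro j
      by_cases h0 : some (j, (⟨0, hr1⟩ : Fin (r-1))) ∈ D
      · exact ⟨_, h0⟩
      · obtain ⟨u, hu, hadj⟩ := hdom _ h0
        match u, hu with
        | none, hu => exact absurd hu hnone
        | some (k, b), hu =>
          rw [wadj_some] at hadj
          exact ⟨b, hadj.1 ▸ hu⟩
    choose b hb using hblade
    have hinj : Function.Injective (fun j : Fin s => (some (j, b j) : Option (Fin s × Fin (r-1)))) := by
      intro x y h
      exact (Prod.ext_iff.mp (Option.some.inj h)).1
    have hsub : Set.range (fun j : Fin s => (some (j, b j) : Option (Fin s × Fin (r-1)))) ⊆ D := by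
      rintro x ⟨j, rfl⟩; exact hb j
    calc s = (Set.range (fun j : Fin s => (some (j, b j) : Option (Fin s × Fin (r-1))))).ncard := by
            rw [← Nat.card_coe_set_eq, Nat.card_range_of_injective hinj,
              Nat.card_eq_fintype_card, Fintype.card_fin]
      _ ≤ D.ncard := Set.ncard_le_ncard hsub (Set.toFinite D)
end

section
/- If G is the disjoint union of graphs G_1,...,G_t and a is a vertex of G_i, then the domination degree of a in G equals the domination degree of a in G_i plus the sum over j ≠ i of the domination numbers γ(G_j). -/
open SimpleGraph

/-- The disjoint union of an indexed family of graphs. -/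
def disjUnion {ι : Type*} {V : ι → Type*} (G : ∀ i, SimpleGraph (V i)) :
    SimpleGraph (Σ i, V i) :=
  SimpleGraph.fromRel (fun x y =>
    ∃ (i : ι) (a b : V i), x = ⟨i, a⟩ ∧ y = ⟨i, b⟩ ∧ (G i).Adj a b)

set_option linter.unusedSectionVars false

section Basic
variable {V : Type*} {G : SimpleGraph V} {D D' : Set V}

lemma IsDomSet.mono (h : IsDomSet G D') (hsub : D' ⊆ D) : IsDomSet G D := by
  intro v hv
  obtain ⟨u, hu, hadj⟩ := h v (fun hv' => hv (hsub hv'))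
  exact ⟨u, hsub hu, hadj⟩

lemma isMinDomSet_iff_forall :
    IsMinDomSet G D ↔ IsDomSet G D ∧ ∀ v ∈ D, ¬ IsDomSet G (D \ {v}) := by
  constructor
  · rintro ⟨hd, hmin⟩
    exact ⟨hd, fun v hv => hmin _ (Set.sdiff_singleton_ssubset.mpr hv)⟩
  · rintro ⟨hd, h⟩
    refine ⟨hd, fun D' hD' hdom => ?_⟩
    obtain ⟨v, hvD, hvD'⟩ := Set.exists_of_ssubset hD'
    exact h v hvD (hdom.mono (Set.subset_diff_singleton hD'.subset hvD'))

lemma exists_minDomSet_mem [Fintype V] (G : SimpleGraph V) (a : V) :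
    ∃ D : Set V, IsMinDomSet G D ∧ a ∈ D := by
  classical
  -- maximal independent finset containing a
  let P : Finset V → Prop := fun s => a ∈ s ∧ ∀ u ∈ s, ∀ v ∈ s, ¬ G.Adj u v
  have hPne : ({a} : Finset V) ∈ Finset.univ.filter P := by
    refine Finset.mem_filter.mpr ⟨Finset.mem_univ _, Finset.mem_singleton_self a, ?_⟩
    intro u hu v hv
    rw [Finset.mem_singleton] at hu hv
    subst hu; subst hv; exact G.irrefl
  obtain ⟨M, hM, hmax⟩ : ∃ m ∈ Finset.univ.filter P, ∀ x ∈ Finset.univ.filter P, ¬ m < x := by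
    obtain ⟨m, hm⟩ := Finset.exists_maximal ⟨_, hPne⟩
    exact ⟨m, hm.prop, fun x hx hlt => hlt.2 (hm.le_of_ge hx hlt.1)⟩
  rw [Finset.mem_filter] at hM
  obtain ⟨-, haM, hind⟩ := hM
  refine ⟨↑M, ?_, ?_⟩
  · rw [isMinDomSet_iff_forall]
    constructor
    · intro v hv
      by_contra hcon
      push_neg at hcon
      have : insert v M ∈ Finset.univ.filter P := by
        rw [Finset.mem_filter]
        refine ⟨Finset.mem_univ _, Finset.mem_insert_of_mem haM, ?_⟩
        intro u hu w hw
        rcases Finset.mem_insert.mp hu with hu | hu <;>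
          rcases Finset.mem_insert.mp hw with hw | hw
        · rw [hu, hw]; exact G.irrefl
        · rw [hu]; exact fun h => hcon w hw h.symm
        · rw [hw]; exact hcon u hu
        · exact hind u hu w hw
      exact hmax _ this (Finset.ssubset_insert (by simpa using hv))
    · intro v hv hdom
      obtain ⟨u, hu, hadj⟩ := hdom v (by simp)
      simp only [Set.mem_diff, Finset.mem_coe, Set.mem_singleton_iff] at hu
      exact hind u hu.1 v (by simpa using hv) hadj
  · simpa using haM

lemma exists_minDomSet_ncard_domNum [Fintype V] (G : SimpleGraph V) :
    ∃ D : Set V, IsMinDomSet G D ∧ D.ncard = domNum G := by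
  classical
  have hne : {n | ∃ D : Set V, IsDomSet G D ∧ D.ncard = n}.Nonempty :=
    ⟨(Set.univ : Set V).ncard, Set.univ, fun v hv => absurd (Set.mem_univ v) hv, rfl⟩
  obtain ⟨D, hD, hcard⟩ := Nat.sInf_mem hne
  refine ⟨D, ⟨hD, fun D' hD' hdom => ?_⟩, hcard⟩
  have h1 : D'.ncard < D.ncard := Set.ncard_lt_ncard hD' (Set.toFinite D)
  have h2 : sInf {n | ∃ D : Set V, IsDomSet G D ∧ D.ncard = n} ≤ D'.ncard :=
    Nat.sInf_le ⟨D', hdom, rfl⟩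
  omega

lemma domNum_le_of_isDomSet [Fintype V] (h : IsDomSet G D) : domNum G ≤ D.ncard :=
  Nat.sInf_le ⟨D, h, rfl⟩
end Basic

section DU
variable {ι : Type*} [DecidableEq ι] {V : ι → Type*} {G : ∀ i, SimpleGraph (V i)}

def sliceD (D : Set (Σ i, V i)) (j : ι) : Set (V j) := {v | (⟨j, v⟩ : Σ i, V i) ∈ D}

lemma adj_disjUnion_iff {x y : Σ i, V i} :
    (disjUnion G).Adj x y ↔
      ∃ (j : ι) (u v : V j), x = ⟨j, u⟩ ∧ y = ⟨j, v⟩ ∧ (G j).Adj u v := by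
  simp only [disjUnion, fromRel_adj]
  constructor
  · rintro ⟨hne, ⟨j, u, v, rfl, rfl, h⟩ | ⟨j, u, v, rfl, rfl, h⟩⟩
    · exact ⟨j, u, v, rfl, rfl, h⟩
    · exact ⟨j, v, u, rfl, rfl, h.symm⟩
  · rintro ⟨j, u, v, rfl, rfl, h⟩
    refine ⟨?_, Or.inl ⟨j, u, v, rfl, rfl, h⟩⟩
    simp only [ne_eq, Sigma.mk.inj_iff, heq_eq_eq, true_and]
    exact fun hc => h.ne hc

lemma isDomSet_disjUnion_iff {D : Set (Σ i, V i)} :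
    IsDomSet (disjUnion G) D ↔ ∀ j, IsDomSet (G j) (sliceD D j) := by
  constructor
  · intro h j v hv
    obtain ⟨u, hu, hadj⟩ := h ⟨j, v⟩ hv
    rw [adj_disjUnion_iff] at hadj
    obtain ⟨k, p, q, rfl, hy, hpq⟩ := hadj
    obtain ⟨rfl, hq⟩ := Sigma.mk.inj_iff.mp hy.symm
    have := eq_of_heq hq
    subst this
    exact ⟨p, hu, hpq⟩
  · intro h x hx
    obtain ⟨j, v⟩ := x
    obtain ⟨u, hu, hadj⟩ := h j v hx
    exact ⟨⟨j, u⟩, hu, adj_disjUnion_iff.mpr ⟨j, u, v, rfl, rfl, hadj⟩⟩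

lemma sliceD_diff_same (D : Set (Σ i, V i)) (j : ι) (v : V j) :
    sliceD (D \ {⟨j, v⟩}) j = sliceD D j \ {v} := by
  ext w
  simp [sliceD, Sigma.mk.inj_iff]

lemma sliceD_diff_ne (D : Set (Σ i, V i)) {j k : ι} (h : k ≠ j) (v : V j) :
    sliceD (D \ {⟨j, v⟩}) k = sliceD D k := by
  ext w
  simp [sliceD, Sigma.mk.inj_iff, h]

lemma isMinDomSet_disjUnion_iff {D : Set (Σ i, V i)} :
    IsMinDomSet (disjUnion G) D ↔ ∀ j, IsMinDomSet (G j) (sliceD D j) := by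
  rw [isMinDomSet_iff_forall, isDomSet_disjUnion_iff]
  constructor
  · rintro ⟨hdom, hmin⟩ j
    rw [isMinDomSet_iff_forall]
    refine ⟨hdom j, fun v hv hdv => ?_⟩
    refine hmin ⟨j, v⟩ hv ?_
    rw [isDomSet_disjUnion_iff]
    intro k
    by_cases hk : k = j
    · subst hk; rw [sliceD_diff_same]; exact hdv
    · rw [sliceD_diff_ne _ hk]; exact hdom k
  · intro h
    refine ⟨fun j => (h j).1, ?_⟩
    rintro ⟨j, v⟩ hv hdv
    rw [isDomSet_disjUnion_iff] at hdv
    have h2 := hdv j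
    rw [sliceD_diff_same] at h2
    exact (isMinDomSet_iff_forall.mp (h j)).2 v hv h2

lemma ncard_eq_sum [Fintype ι] [∀ i, Fintype (V i)] (D : Set (Σ i, V i)) :
    D.ncard = ∑ j, (sliceD D j).ncard := by
  classical
  have e : D ≃ Σ j, (sliceD D j) :=
    { toFun := fun x => ⟨x.1.1, ⟨x.1.2, x.2⟩⟩
      invFun := fun y => ⟨⟨y.1, y.2.1⟩, y.2.2⟩
      left_inv := by rintro ⟨⟨j, v⟩, h⟩; rfl
      right_inv := by rintro ⟨j, v, h⟩; rfl }
  rw [← Nat.card_coe_set_eq, Nat.card_congr e, Nat.card_eq_fintype_card,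
    Fintype.card_sigma]
  exact Finset.sum_congr rfl fun j _ => by
    rw [← Nat.card_eq_fintype_card, Nat.card_coe_set_eq]
end DU

theorem stmt13 {ι : Type*} [Fintype ι] [DecidableEq ι] {V : ι → Type*}
    [∀ i, Fintype (V i)] [∀ i, Nonempty (V i)]
    (G : ∀ i, SimpleGraph (V i)) (i : ι) (a : V i) :
    domDeg (disjUnion G) ⟨i, a⟩ =
      domDeg (G i) a + ∑ j ∈ Finset.univ.erase i, domNum (G j) := by
  classical
  -- attainment for domDeg (G i) a
  have hne_i : {n | ∃ D : Set (V i), IsMinDomSet (G i) D ∧ a ∈ D ∧ D.ncard = n}.Nonempty := by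
    obtain ⟨D, hD, haD⟩ := exists_minDomSet_mem (G i) a
    exact ⟨D.ncard, D, hD, haD, rfl⟩
  obtain ⟨Di, hDi, haDi, hDicard⟩ := Nat.sInf_mem hne_i
  choose Dj hDj hDjcard using fun j => exists_minDomSet_ncard_domNum (G j)
  refine le_antisymm ?_ ?_
  · -- construct the combined set
    set F : ∀ j, Set (V j) := fun j => if h : j = i then h ▸ Di else Dj j with hF
    have hFi : F i = Di := by simp [hF]
    have hFj : ∀ j, j ≠ i → F j = Dj j := fun j hj => by simp [hF, hj]
    set Dd : Set (Σ j, V j) := {x | x.2 ∈ F x.1} with hDd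
    have hslice : ∀ j, sliceD Dd j = F j := fun j => rfl
    apply Nat.sInf_le
    refine ⟨Dd, ?_, ?_, ?_⟩
    · rw [isMinDomSet_disjUnion_iff]
      intro j
      rw [hslice]
      by_cases hj : j = i
      · subst hj; rw [hFi]; exact hDi
      · rw [hFj j hj]; exact hDj j
    · show a ∈ F i
      rw [hFi]; exact haDi
    · rw [ncard_eq_sum, ← Finset.add_sum_erase _ _ (Finset.mem_univ i)]
      congr 1
      · rw [hslice, hFi]; exact hDicard
      · refine Finset.sum_congr rfl fun j hj => ?_
        rw [hslice, hFj j (Finset.ne_of_mem_erase hj)]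
        exact hDjcard j
  · -- lower bound
    have hne : {n | ∃ D : Set (Σ j, V j), IsMinDomSet (disjUnion G) D ∧
        (⟨i, a⟩ : Σ j, V j) ∈ D ∧ D.ncard = n}.Nonempty := by
      obtain ⟨D, hD, haD⟩ := exists_minDomSet_mem (disjUnion G) ⟨i, a⟩
      exact ⟨D.ncard, D, hD, haD, rfl⟩
    obtain ⟨D, hD, haD, hcard⟩ := Nat.sInf_mem hne
    have hsl := isMinDomSet_disjUnion_iff.mp hD
    have h1 : domDeg (G i) a ≤ (sliceD D i).ncard :=
      Nat.sInf_le ⟨sliceD D i, hsl i, haD, rfl⟩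
    have h2 : ∀ j ∈ Finset.univ.erase i, domNum (G j) ≤ (sliceD D j).ncard :=
      fun j _ => domNum_le_of_isDomSet (hsl j).1
    calc domDeg (G i) a + ∑ j ∈ Finset.univ.erase i, domNum (G j)
        ≤ (sliceD D i).ncard + ∑ j ∈ Finset.univ.erase i, (sliceD D j).ncard :=
          add_le_add h1 (Finset.sum_le_sum h2)
      _ = ∑ j, (sliceD D j).ncard :=
          Finset.add_sum_erase _ (fun j => (sliceD D j).ncard) (Finset.mem_univ i)
      _ = D.ncard := (ncard_eq_sum D).symm
      _ = domDeg (disjUnion G) ⟨i, a⟩ := hcard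
end

section
/- Let H = G ∘ K_n be the lexicographic product (composition) of a graph G with the complete graph K_n. Then for every vertex (a, b) of H, the domination degree of (a,b) in H equals the domination degree of a in G. -/
open SimpleGraph

/-- The lexicographic product (composition) `G ∘ K_n`. -/
def lexCompleteProd {V : Type*} (G : SimpleGraph V) (n : ℕ) :
    SimpleGraph (V × Fin n) where
  Adj x y := G.Adj x.1 y.1 ∨ (x.1 = y.1 ∧ x.2 ≠ y.2)
  symm := ⟨by
    rintro ⟨a, u⟩ ⟨b, v⟩ (h | ⟨h₁, h₂⟩)
    · exact Or.inl h.symm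
    · exact Or.inr ⟨h₁.symm, h₂.symm⟩⟩
  loopless := ⟨by rintro ⟨a, u⟩ (h | ⟨_, h⟩) <;> simp_all⟩

lemma prodFiber_minDom {V : Type*} {G : SimpleGraph V} {n : ℕ} (b : Fin n)
    {D : Set V} (hD : IsMinDomSet G D) :
    IsMinDomSet (lexCompleteProd G n) ((fun x => (x, b)) '' D) := by
  have hmem : ∀ p : V × Fin n, p ∈ ((fun x => (x, b)) '' D) ↔ p.1 ∈ D ∧ p.2 = b := by
    rintro ⟨x, c⟩
    constructor
    · rintro ⟨y, hy, h⟩; cases h; exact ⟨hy, rfl⟩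
    · rintro ⟨h1, h2⟩; exact ⟨x, h1, by rw [← h2]⟩
  constructor
  · rintro ⟨v, c⟩ hv
    by_cases hvD : v ∈ D
    · have hcb : c ≠ b := fun h => hv ((hmem _).2 ⟨hvD, h⟩)
      exact ⟨(v, b), (hmem _).2 ⟨hvD, rfl⟩, Or.inr ⟨rfl, fun h => hcb h.symm⟩⟩
    · obtain ⟨u, hu, hadj⟩ := hD.1 v hvD
      exact ⟨(u, b), (hmem _).2 ⟨hu, rfl⟩, Or.inl hadj⟩
  · rintro D' hsub hdom'
    have hsub0 : Prod.fst '' D' ⊆ D := by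
      rintro _ ⟨p, hp, rfl⟩
      exact ((hmem p).1 (hsub.1 hp)).1
    obtain ⟨p, hpE, hpD'⟩ := Set.exists_of_ssubset hsub
    obtain ⟨hp1, hp2⟩ := (hmem p).1 hpE
    have hp0 : p.1 ∉ Prod.fst '' D' := by
      rintro ⟨q, hq, hq1⟩
      have hq2 := (hmem q).1 (hsub.1 hq)
      apply hpD'
      have : q = p := Prod.ext hq1 (hq2.2.trans hp2.symm)
      rwa [← this]
    apply hD.2 (Prod.fst '' D') ⟨hsub0, fun h => hp0 (h hp1)⟩
    intro v hv
    have hvb : (v, b) ∉ D' := fun h => hv ⟨(v, b), h, rfl⟩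
    obtain ⟨⟨u, c⟩, hu, hadj⟩ := hdom' (v, b) hvb
    rcases hadj with h | ⟨h1, h2⟩
    · exact ⟨u, ⟨(u, c), hu, rfl⟩, h⟩
    · exact absurd ⟨(u, c), hu, h1⟩ hv

lemma proj_minDom {V : Type*} {G : SimpleGraph V} {n : ℕ} (b : Fin n)
    {E : Set (V × Fin n)} (hE : IsMinDomSet (lexCompleteProd G n) E) :
    IsMinDomSet G (Prod.fst '' E) ∧ Set.InjOn Prod.fst E := by
  have hinj : Set.InjOn Prod.fst E := by
    rintro ⟨x, c⟩ hxc ⟨x', c'⟩ hxc' (h : x = x')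
    subst h
    by_contra hne
    have hcc : c ≠ c' := fun h => hne (by rw [h])
    apply hE.2 (E \ {(x, c')})
    · exact Set.sdiff_singleton_ssubset.2 hxc'
    · rintro ⟨w, d⟩ hw
      by_cases hwE : (w, d) ∈ E
      · have hwd : (w, d) = (x, c') := by
          by_contra h; exact hw ⟨hwE, h⟩
        injection hwd with hw1 hw2
        subst hw1; subst hw2
        exact ⟨(w, c), ⟨hxc, fun h => hcc (congrArg Prod.snd h)⟩, Or.inr ⟨rfl, hcc⟩⟩
      · obtain ⟨⟨u, e⟩, hu, hadj⟩ := hE.1 (w, d) hwE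
        by_cases hne2 : (u, e) = (x, c')
        · injection hne2 with h1 h2
          subst h1; subst h2
          rcases hadj with h | ⟨h1, h2⟩
          · exact ⟨(u, c), ⟨hxc, fun h => hcc (congrArg Prod.snd h)⟩, Or.inl h⟩
          · subst h1
            have hcd : c ≠ d := fun h => hwE (h ▸ hxc)
            exact ⟨(u, c), ⟨hxc, fun h => hcc (congrArg Prod.snd h)⟩, Or.inr ⟨rfl, hcd⟩⟩
        · exact ⟨(u, e), ⟨hu, hne2⟩, hadj⟩
  refine ⟨⟨?_, ?_⟩, hinj⟩
  · intro v hv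
    have hvb : (v, b) ∉ E := fun h => hv ⟨(v, b), h, rfl⟩
    obtain ⟨⟨u, c⟩, hu, hadj⟩ := hE.1 (v, b) hvb
    rcases hadj with h | ⟨h1, h2⟩
    · exact ⟨u, ⟨(u, c), hu, rfl⟩, h⟩
    · exact absurd ⟨(u, c), hu, h1⟩ hv
  · rintro D' hsub hdom'
    apply hE.2 {p ∈ E | p.1 ∈ D'}
    · constructor
      · exact fun p hp => hp.1
      · intro h
        obtain ⟨x, hxD, hxD'⟩ := Set.exists_of_ssubset hsub
        obtain ⟨⟨y, c⟩, hy, (hy1 : y = x)⟩ := hxD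
        subst hy1
        exact hxD' (h hy).2
    · rintro ⟨v, d⟩ hv
      by_cases hvD' : v ∈ D'
      · have hvD : v ∈ Prod.fst '' E := hsub.1 hvD'
        obtain ⟨⟨w, c⟩, hw, (hw1 : w = v)⟩ := hvD
        subst hw1
        have hcd : c ≠ d := by
          intro h; subst h; exact hv ⟨hw, hvD'⟩
        exact ⟨(w, c), ⟨hw, hvD'⟩, Or.inr ⟨rfl, hcd⟩⟩
      · obtain ⟨u, hu, hadj⟩ := hdom' v hvD'
        obtain ⟨⟨w, c⟩, hw, (hw1 : w = u)⟩ := hsub.1 hu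
        subst hw1
        exact ⟨(w, c), ⟨hw, hu⟩, Or.inl hadj⟩

theorem stmt15 {V : Type*} [Fintype V] [Nonempty V] (G : SimpleGraph V)
    (n : ℕ) (hn : 1 ≤ n) (a : V) (b : Fin n) :
    domDeg (lexCompleteProd G n) (a, b) = domDeg G a := by
  unfold domDeg
  congr 1
  ext m
  simp only [Set.mem_setOf_eq]
  constructor
  · rintro ⟨E, hE, haE, rfl⟩
    obtain ⟨hmin, hinj⟩ := proj_minDom b hE
    exact ⟨Prod.fst '' E, hmin, ⟨(a, b), haE, rfl⟩, Set.ncard_image_of_injOn hinj⟩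
  · rintro ⟨D, hD, haD, rfl⟩
    exact ⟨(fun x => (x, b)) '' D, prodFiber_minDom b hD, ⟨a, haD, rfl⟩,
      Set.ncard_image_of_injective _ (fun x y h => congrArg Prod.fst h)⟩
end

section
/- Let P_n be the path on n vertices. Then DI(P_n) = k(3k+2) if n = 3k, DI(P_n) = (3k+1)(k+1) if n = 3k+1, and DI(P_n) = k(k+2) + 2(k+1)^2 if n = 3k+2. -/
open SimpleGraph

set_option linter.unnecessarySeqFocus false


private lemma card3 (a b c : ℕ) : ({a, b, c} : Finset ℕ).card ≤ 3 := by
  apply (Finset.card_insert_le _ _).trans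
  have := Finset.card_insert_le b ({c} : Finset ℕ)
  simp at this ⊢
  omega

private lemma coverA {N : Finset ℕ} {w : ℕ} (hw : w ∈ N)
    (hdom : ∀ m < w, m ∈ N ∨ m + 1 ∈ N ∨ ∃ p, p + 1 = m ∧ p ∈ N) :
    w + 2 ≤ 3 * (N.filter (· ≤ w)).card := by
  classical
  set A := N.filter (· ≤ w) with hA
  have hwA : w ∈ A := by simp [hA, hw]
  set cov : ℕ → Finset ℕ := fun a => if a = w then {w - 1} else {a - 1, a, a + 1} with hcov
  have hsub : Finset.range w ⊆ A.biUnion cov := by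
    intro m hm
    rw [Finset.mem_range] at hm
    rw [Finset.mem_biUnion]
    rcases hdom m hm with h | h | ⟨p, hp, hpN⟩
    · refine ⟨m, by simp [hA, h, hm.le], ?_⟩
      simp [hcov, Nat.ne_of_lt hm]
    · by_cases he : m + 1 = w
      · exact ⟨w, hwA, by simp [hcov]; omega⟩
      · refine ⟨m + 1, ?_, ?_⟩
        · simp [hA]; exact ⟨h, by omega⟩
        · simp [hcov, he]
    · refine ⟨p, ?_, ?_⟩
      · simp [hA]; exact ⟨hpN, by omega⟩
      · have hne : p ≠ w := by omega
        simp [hcov, hne]; omega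
  have h1 : w ≤ ∑ a ∈ A, (cov a).card := by
    calc w = (Finset.range w).card := (Finset.card_range w).symm
    _ ≤ (A.biUnion cov).card := Finset.card_le_card hsub
    _ ≤ ∑ a ∈ A, (cov a).card := Finset.card_biUnion_le
  have h2 : ∑ a ∈ A, (cov a).card ≤ 1 + 3 * (A.card - 1) := by
    rw [← Finset.add_sum_erase A _ hwA]
    have hcw : (cov w).card ≤ 1 := by simp [hcov]
    have hrest : ∑ a ∈ A.erase w, (cov a).card ≤ (A.erase w).card * 3 := by
      apply Finset.sum_le_card_nsmul
      intro x hx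
      rcases eq_or_ne x w with rfl | hne
      · simp [hcov]
      · simp only [hcov, if_neg hne]
        exact card3 _ _ _
    rw [Finset.card_erase_of_mem hwA] at hrest
    omega
  have hpos : 0 < A.card := Finset.card_pos.mpr ⟨w, hwA⟩
  omega

private lemma coverB {N : Finset ℕ} {w n : ℕ} (hw : w ∈ N) (hwn : w < n)
    (hdom : ∀ m, w < m → m < n → m ∈ N ∨ m + 1 ∈ N ∨ ∃ p, p + 1 = m ∧ p ∈ N) :
    n + 1 ≤ w + 3 * (N.filter (fun a => w ≤ a)).card := by
  classical
  set B := N.filter (fun a => w ≤ a) with hB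
  have hwB : w ∈ B := by simp [hB, hw]
  set cov : ℕ → Finset ℕ := fun a => if a = w then {w + 1} else {a - 1, a, a + 1} with hcov
  have hsub : Finset.Ico (w + 1) n ⊆ B.biUnion cov := by
    intro m hm
    rw [Finset.mem_Ico] at hm
    obtain ⟨hm1, hm2⟩ := hm
    rw [Finset.mem_biUnion]
    rcases hdom m (by omega) hm2 with h | h | ⟨p, hp, hpN⟩
    · refine ⟨m, by simp [hB, h]; omega, ?_⟩
      have hne : m ≠ w := by omega
      simp [hcov, hne]
    · refine ⟨m + 1, ?_, ?_⟩
      · simp [hB]; exact ⟨h, by omega⟩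
      · have hne : m + 1 ≠ w := by omega
        simp [hcov, hne]
    · by_cases he : p = w
      · exact ⟨w, hwB, by simp [hcov]; omega⟩
      · refine ⟨p, ?_, ?_⟩
        · simp [hB]; exact ⟨hpN, by omega⟩
        · simp [hcov, he]; omega
  have h1 : n - (w + 1) ≤ ∑ a ∈ B, (cov a).card := by
    calc n - (w + 1) = (Finset.Ico (w + 1) n).card := by rw [Nat.card_Ico]
    _ ≤ (B.biUnion cov).card := Finset.card_le_card hsub
    _ ≤ ∑ a ∈ B, (cov a).card := Finset.card_biUnion_le
  have h2 : ∑ a ∈ B, (cov a).card ≤ 1 + 3 * (B.card - 1) := by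
    rw [← Finset.add_sum_erase B _ hwB]
    have hcw : (cov w).card ≤ 1 := by simp [hcov]
    have hrest : ∑ a ∈ B.erase w, (cov a).card ≤ (B.erase w).card * 3 := by
      apply Finset.sum_le_card_nsmul
      intro x hx
      rcases eq_or_ne x w with rfl | hne
      · simp [hcov]
      · simp only [hcov, if_neg hne]
        exact card3 _ _ _
    rw [Finset.card_erase_of_mem hwB] at hrest
    omega
  have hpos : 0 < B.card := Finset.card_pos.mpr ⟨w, hwB⟩
  omega

private lemma domDeg_lower {n : ℕ} {D : Set (Fin n)} (hD : IsDomSet (pathGraph n) D)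
    {v : Fin n} (hv : v ∈ D) :
    (v.val + 1) / 3 + (n + 3 - v.val) / 3 ≤ D.ncard := by
  classical
  set N : Finset ℕ := (D.toFinite.toFinset).image Fin.val with hN
  have hmemN : ∀ x, x ∈ N ↔ ∃ u ∈ D, (u : Fin n).val = x := by
    intro x; simp [hN]
  have hcard : N.card = D.ncard := by
    rw [hN, Finset.card_image_of_injective _ Fin.val_injective,
      ← Set.ncard_eq_toFinset_card D D.toFinite]
  have hdomN : ∀ m, m < n → m ∈ N ∨ m + 1 ∈ N ∨ ∃ p, p + 1 = m ∧ p ∈ N := by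
    intro m hm
    by_cases hmem : (⟨m, hm⟩ : Fin n) ∈ D
    · left; rw [hmemN]; exact ⟨_, hmem, rfl⟩
    · obtain ⟨u, huD, hadj⟩ := hD _ hmem
      rw [pathGraph_adj] at hadj
      rcases hadj with h | h
      · right; right; exact ⟨u.val, h, (hmemN _).mpr ⟨u, huD, rfl⟩⟩
      · right; left; rw [hmemN]; exact ⟨u, huD, h.symm⟩
  have hwN : v.val ∈ N := (hmemN _).mpr ⟨v, hv, rfl⟩
  have hA := coverA hwN (fun m hm => hdomN m (lt_trans hm v.isLt))
  have hB := coverB hwN v.isLt (fun m _ h2 => hdomN m h2)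
  have hsplit : (N.filter (· ≤ v.val)).card + (N.filter (fun a => v.val ≤ a)).card
      = N.card + 1 := by
    have hu : N.filter (· ≤ v.val) ∪ N.filter (fun a => v.val ≤ a) = N := by
      ext a; simp only [Finset.mem_union, Finset.mem_filter]
      constructor
      · rintro (⟨h, _⟩ | ⟨h, _⟩) <;> exact h
      · intro h; rcases le_total a v.val with h' | h'
        · exact Or.inl ⟨h, h'⟩
        · exact Or.inr ⟨h, h'⟩
    have hi : N.filter (· ≤ v.val) ∩ N.filter (fun a => v.val ≤ a) = {v.val} := by
      ext a; simp only [Finset.mem_inter, Finset.mem_filter, Finset.mem_singleton]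
      constructor
      · rintro ⟨⟨_, h1⟩, ⟨_, h2⟩⟩; omega
      · rintro rfl; exact ⟨⟨hwN, le_refl _⟩, ⟨hwN, le_refl _⟩⟩
    have := Finset.card_union_add_card_inter (N.filter (· ≤ v.val))
      (N.filter (fun a => v.val ≤ a))
    rw [hu, hi] at this
    simp at this
    omega
  have hvlt := v.isLt
  omega

private lemma indep_min {V : Type*} {G : SimpleGraph V} {D : Set V} (hdom : IsDomSet G D)
    (hind : ∀ a ∈ D, ∀ b ∈ D, ¬ G.Adj a b) : IsMinDomSet G D := by
  refine ⟨hdom, ?_⟩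
  intro D' hss hdom'
  obtain ⟨d, hdD, hdD'⟩ := Set.exists_of_ssubset hss
  obtain ⟨u, huD', hadj⟩ := hdom' d hdD'
  exact hind u (hss.1 huD') d hdD hadj

private lemma count_mod (n r : ℕ) (hr : r < 3) :
    ((Finset.range n).filter (fun m => m % 3 = r)).card = (n + 2 - r) / 3 := by
  induction n with
  | zero => simp; omega
  | succ n ih =>
    rw [Finset.range_add_one, Finset.filter_insert]
    by_cases h : n % 3 = r
    · rw [if_pos h, Finset.card_insert_of_notMem (by simp), ih]
      omega
    · rw [if_neg h, ih]
      omega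

private lemma domDeg_upper (n : ℕ) (v : Fin n) :
    ∃ D : Set (Fin n), IsMinDomSet (pathGraph n) D ∧ v ∈ D ∧
      D.ncard = (v.val + 1) / 3 + (n + 3 - v.val) / 3 := by
  classical
  have hn : 0 < n := v.pos
  have hvlt := v.isLt
  set D : Set (Fin n) := {u | u.val % 3 = v.val % 3 ∨ (v.val % 3 = 2 ∧ u.val = 0) ∨
    ((n - 1 - v.val) % 3 = 2 ∧ u.val = n - 1)} with hD
  have hvD : v ∈ D := Or.inl rfl
  have hdom : IsDomSet (pathGraph n) D := by
    intro u hu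
    simp only [hD, Set.mem_setOf_eq] at hu
    push_neg at hu
    obtain ⟨h1, h2, h3⟩ := hu
    have hult := u.isLt
    by_cases hc : u.val % 3 = (v.val % 3 + 1) % 3
    · have hu0 : u.val ≠ 0 := by omega
      refine ⟨⟨u.val - 1, by omega⟩, ?_, ?_⟩
      · simp only [hD, Set.mem_setOf_eq]; left
        show (u.val - 1) % 3 = v.val % 3
        omega
      · rw [pathGraph_adj]; left
        show (u.val - 1) + 1 = u.val
        omega
    · have hc2 : u.val % 3 = (v.val % 3 + 2) % 3 := by omega
      have hlt : u.val + 1 < n := by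
        by_contra h
        exact h3 (by omega) (by omega)
      refine ⟨⟨u.val + 1, hlt⟩, ?_, ?_⟩
      · simp only [hD, Set.mem_setOf_eq]; left
        show (u.val + 1) % 3 = v.val % 3
        omega
      · rw [pathGraph_adj]; right
        show (u : Fin n).val + 1 = u.val + 1
        rfl
  have hind : ∀ a ∈ D, ∀ b ∈ D, ¬ (pathGraph n).Adj a b := by
    intro a ha b hb hadj
    simp only [hD, Set.mem_setOf_eq] at ha hb
    rw [pathGraph_adj] at hadj
    have h1 := a.isLt
    have h2 := b.isLt
    omega
  refine ⟨D, indep_min hdom hind, hvD, ?_⟩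
  have himg : Fin.val '' D = ↑((Finset.range n).filter
      (fun m => m % 3 = v.val % 3 ∨ (v.val % 3 = 2 ∧ m = 0) ∨
        ((n - 1 - v.val) % 3 = 2 ∧ m = n - 1))) := by
    ext m
    simp only [Set.mem_image, Finset.coe_filter, Set.mem_setOf_eq, Finset.mem_range, hD]
    constructor
    · rintro ⟨u, hu, rfl⟩
      exact ⟨u.isLt, hu⟩
    · rintro ⟨hm, hq⟩
      exact ⟨⟨m, hm⟩, hq, rfl⟩
  have hkey := Set.ncard_image_of_injective D Fin.val_injective
  rw [himg, Set.ncard_coe_finset] at hkey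
  rw [← hkey]
  -- split the filter
  set X1 : Finset ℕ := if v.val % 3 = 2 then {0} else ∅ with hX1
  set X2 : Finset ℕ := if (n - 1 - v.val) % 3 = 2 then {n - 1} else ∅ with hX2
  have hsplit : (Finset.range n).filter
      (fun m => m % 3 = v.val % 3 ∨ (v.val % 3 = 2 ∧ m = 0) ∨
        ((n - 1 - v.val) % 3 = 2 ∧ m = n - 1))
      = ((Finset.range n).filter (fun m => m % 3 = v.val % 3)) ∪ (X1 ∪ X2) := by
    ext m
    by_cases ha : v.val % 3 = 2 <;> by_cases hb : (n - 1 - v.val) % 3 = 2 <;>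
      simp only [hX1, hX2, if_pos, if_neg, ha, hb, Finset.mem_union, Finset.mem_filter,
        Finset.mem_range, Finset.mem_singleton, Finset.notMem_empty, if_true, if_false] <;>
      simp <;> omega
  rw [hsplit]
  have hd1 : Disjoint ((Finset.range n).filter (fun m => m % 3 = v.val % 3)) (X1 ∪ X2) := by
    rw [Finset.disjoint_left]
    intro m hm hm2
    simp only [Finset.mem_filter, Finset.mem_range] at hm
    by_cases ha : v.val % 3 = 2 <;> by_cases hb : (n - 1 - v.val) % 3 = 2 <;>
      simp only [hX1, hX2, ha, hb, if_true, if_false, Finset.mem_union, Finset.mem_singleton,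
        Finset.notMem_empty, or_false, false_or] at hm2 <;> omega
  have hd2 : Disjoint X1 X2 := by
    rw [Finset.disjoint_left]
    intro m hm hm2
    by_cases ha : v.val % 3 = 2 <;> by_cases hb : (n - 1 - v.val) % 3 = 2 <;>
      simp only [hX1, hX2, ha, hb, if_true, if_false, Finset.mem_singleton,
        Finset.notMem_empty] at hm hm2 <;> omega
  rw [Finset.card_union_of_disjoint hd1, Finset.card_union_of_disjoint hd2,
    count_mod n (v.val % 3) (by omega)]
  have hc1 : X1.card = if v.val % 3 = 2 then 1 else 0 := by
    by_cases ha : v.val % 3 = 2 <;> simp [hX1, ha]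
  have hc2 : X2.card = if (n - 1 - v.val) % 3 = 2 then 1 else 0 := by
    by_cases hb : (n - 1 - v.val) % 3 = 2 <;> simp [hX2, hb]
  rw [hc1, hc2]
  by_cases ha : v.val % 3 = 2 <;> by_cases hb : (n - 1 - v.val) % 3 = 2 <;>
    simp [ha, hb] <;> omega

private lemma domDeg_path (n : ℕ) (v : Fin n) :
    domDeg (pathGraph n) v = (v.val + 1) / 3 + (n + 3 - v.val) / 3 := by
  obtain ⟨D, hmin, hvD, hcard⟩ := domDeg_upper n v
  unfold domDeg
  apply le_antisymm
  · have hmem : ((v.val + 1) / 3 + (n + 3 - v.val) / 3) ∈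
        {m | ∃ D : Set (Fin n), IsMinDomSet (pathGraph n) D ∧ v ∈ D ∧ D.ncard = m} :=
      ⟨D, hmin, hvD, hcard⟩
    exact Nat.sInf_le hmem
  · have hne : Set.Nonempty
        {m | ∃ D : Set (Fin n), IsMinDomSet (pathGraph n) D ∧ v ∈ D ∧ D.ncard = m} :=
      ⟨_, D, hmin, hvD, hcard⟩
    apply le_csInf hne
    rintro b ⟨D', ⟨hdom', _⟩, hvD', rfl⟩
    exact domDeg_lower hdom' hvD'

private lemma domIndex_path (n : ℕ) :
    domIndex (pathGraph n) = ∑ x ∈ Finset.range n, ((x + 1) / 3 + (x + 4) / 3) := by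
  unfold domIndex
  have h1 : ∀ a : Fin n, domDeg (pathGraph n) a
      = (fun x => (x + 1) / 3 + (n + 3 - x) / 3) a.val := fun a => domDeg_path n a
  rw [Finset.sum_congr rfl (fun a _ => h1 a),
    Fin.sum_univ_eq_sum_range (fun x => (x + 1) / 3 + (n + 3 - x) / 3) n]
  rw [Finset.sum_add_distrib, Finset.sum_add_distrib]
  congr 1
  calc ∑ x ∈ Finset.range n, (n + 3 - x) / 3
      = ∑ x ∈ Finset.range n, ((n - 1 - x) + 4) / 3 := by
        apply Finset.sum_congr rfl
        intro x hx
        rw [Finset.mem_range] at hx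
        congr 1
        omega
    _ = ∑ x ∈ Finset.range n, (x + 4) / 3 :=
        Finset.sum_range_reflect (fun x => (x + 4) / 3) n

private lemma sum_formula (k : ℕ) :
    (∑ x ∈ Finset.range (3 * k), ((x + 1) / 3 + (x + 4) / 3)) = k * (3 * k + 2)
    ∧ (∑ x ∈ Finset.range (3 * k + 1), ((x + 1) / 3 + (x + 4) / 3)) = (3 * k + 1) * (k + 1)
    ∧ (∑ x ∈ Finset.range (3 * k + 2), ((x + 1) / 3 + (x + 4) / 3))
      = k * (k + 2) + 2 * (k + 1) ^ 2 := by
  induction k with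
  | zero => simp [Finset.sum_range_succ]
  | succ k ih =>
    obtain ⟨h1, h2, h3⟩ := ih
    have e1 : (∑ x ∈ Finset.range (3 * (k + 1)), ((x + 1) / 3 + (x + 4) / 3))
        = (k + 1) * (3 * (k + 1) + 2) := by
      rw [show 3 * (k + 1) = (3 * k + 2) + 1 by ring, Finset.sum_range_succ, h3]
      rw [show (3 * k + 2 + 1) / 3 = k + 1 by omega, show (3 * k + 2 + 4) / 3 = k + 2 by omega]
      ring
    have e2 : (∑ x ∈ Finset.range (3 * (k + 1) + 1), ((x + 1) / 3 + (x + 4) / 3))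
        = (3 * (k + 1) + 1) * ((k + 1) + 1) := by
      rw [Finset.sum_range_succ, e1]
      rw [show (3 * (k + 1) + 1) / 3 = k + 1 by omega,
        show (3 * (k + 1) + 4) / 3 = k + 2 by omega]
      ring
    have e3 : (∑ x ∈ Finset.range (3 * (k + 1) + 2), ((x + 1) / 3 + (x + 4) / 3))
        = (k + 1) * ((k + 1) + 2) + 2 * ((k + 1) + 1) ^ 2 := by
      rw [show 3 * (k + 1) + 2 = (3 * (k + 1) + 1) + 1 by ring, Finset.sum_range_succ, e2]
      rw [show (3 * (k + 1) + 1 + 1) / 3 = k + 1 by omega,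
        show (3 * (k + 1) + 1 + 4) / 3 = k + 2 by omega]
      ring
    exact ⟨e1, e2, e3⟩

theorem stmt19 (n k : ℕ) :
    (n = 3 * k → domIndex (SimpleGraph.pathGraph n) = k * (3 * k + 2)) ∧
    (n = 3 * k + 1 → domIndex (SimpleGraph.pathGraph n) = (3 * k + 1) * (k + 1)) ∧
    (n = 3 * k + 2 → domIndex (SimpleGraph.pathGraph n) = k * (k + 2) + 2 * (k + 1) ^ 2) := by
  obtain ⟨h1, h2, h3⟩ := sum_formula k
  refine ⟨?_, ?_, ?_⟩ <;> rintro rfl <;> rw [domIndex_path]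
  · exact h1
  · exact h2
  · exact h3
end
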